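/- arXiv:1511.02899 — 8 statements merged into one kernel-verified Lean document; each statement's English description precedes it below -/
import Mathlib

section
/- For every real α with 0 < α < 1/2 and every ε > 0 there exists an n₀ such that for all n ≥ n₀ and every pair of integers (m_A, m_B) that is achievable for the deterministic combinatorial Slepian–Wolf scheme with parameters (n, ⌊αn⌋), the following three inequalities hold: m_A + m_B ≥ (1 + h(α))·n − ε·n, m_A ≥ h(α)·n − ε·n, and m_B ≥ h(α)·n − ε·n. -/
/-!
For a fixed `y₀`, unique decodability makes `CodeA` injective on the Hamming ball of
radius `T` around `y₀`, so `2 ^ m_A ≥ C(n, T)`, and symmetrically `2 ^ m_B ≥ C(n, T)`.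
The map `(x, y) ↦ (CodeA x, CodeB y)` is injective on the at least `2 ^ n · C(n, T)`
pairs at distance `T`, so `2 ^ (m_A + m_B) ≥ 2 ^ n · C(n, T)`.
It remains to bound `C(n, k) ≥ 2 ^ (n h(k/n)) / (n + 1)`: the term
`C(n, k) k ^ k (n - k) ^ (n - k)` is the largest of the `n + 1` terms of the binomial
expansion of `n ^ n = (k + (n - k)) ^ n`. Continuity of `h` and `⌊α n⌋ / n → α` finish.
-/

/-- The binary entropy function `h(α) = −α·log₂ α − (1−α)·log₂(1−α)`. -/
noncomputable def binEnt (a : ℝ) : ℝ :=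
  -a * Real.logb 2 a - (1 - a) * Real.logb 2 (1 - a)

/-- A pair of encodings is uniquely decodable for the combinatorial Slepian–Wolf
scheme with parameters `(n, T)`. -/
def UniquelyDecodable {n mA mB : ℕ} (T : ℕ)
    (CodeA : (Fin n → Bool) → (Fin mA → Bool))
    (CodeB : (Fin n → Bool) → (Fin mB → Bool)) : Prop :=
  ∀ x y x' y' : Fin n → Bool,
    hammingDist x y ≤ T → hammingDist x' y' ≤ T →
    CodeA x = CodeA x' → CodeB y = CodeB y' → (x, y) = (x', y')

/-- `(mA, mB)` is an achievable pair of rates for the deterministic combinatorial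
Slepian–Wolf scheme with parameters `(n, T)`. -/
def Achievable (n T mA mB : ℕ) : Prop :=
  ∃ (CodeA : (Fin n → Bool) → (Fin mA → Bool))
    (CodeB : (Fin n → Bool) → (Fin mB → Bool)),
    UniquelyDecodable T CodeA CodeB

open Finset Real Filter Topology

section Flip

variable {ι : Type*} [DecidableEq ι]

def flipOn (x : ι → Bool) (s : Finset ι) : ι → Bool :=
  fun i => xor (x i) (decide (i ∈ s))

lemma hammingDist_flipOn [Fintype ι] (x : ι → Bool) (s : Finset ι) :
    hammingDist x (flipOn x s) = #s := by
  unfold hammingDist flipOn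
  congr 1
  ext i
  cases x i <;> by_cases i ∈ s <;> simp [*]

lemma flipOn_injective (x : ι → Bool) : Function.Injective (flipOn x) := by
  intro s t h
  ext i
  simpa [flipOn] using congrFun h i

end Flip

section Counting

variable {n mA mB T : ℕ} {CodeA : (Fin n → Bool) → (Fin mA → Bool)}
  {CodeB : (Fin n → Bool) → (Fin mB → Bool)}

lemma UniquelyDecodable.swap (h : UniquelyDecodable T CodeA CodeB) :
    UniquelyDecodable T CodeB CodeA := by
  intro y x y' x' hyx hyx' hB hA
  rw [hammingDist_comm] at hyx hyx'
  simpa [and_comm] using h x y x' y' hyx hyx' hA hB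

lemma UniquelyDecodable.choose_le_two_pow_left (h : UniquelyDecodable T CodeA CodeB) :
    n.choose T ≤ 2 ^ mA := by
  let y : Fin n → Bool := fun _ => false
  let S : Finset (Finset (Fin n)) := powersetCard T univ
  have hclose : ∀ s ∈ S, hammingDist (flipOn y s) y ≤ T := fun s hs => by
    rw [hammingDist_comm, hammingDist_flipOn, (mem_powersetCard.1 hs).2]
  have hinj : Set.InjOn (fun s => CodeA (flipOn y s)) S := by
    intro s hs t ht hst
    exact flipOn_injective y (Prod.ext_iff.1 (h _ _ _ _ (hclose s hs) (hclose t ht) hst rfl)).1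
  simpa [S] using card_le_card_of_injOn _ (fun _ _ => mem_univ _) hinj

lemma UniquelyDecodable.choose_le_two_pow_right (h : UniquelyDecodable T CodeA CodeB) :
    n.choose T ≤ 2 ^ mB :=
  h.swap.choose_le_two_pow_left

lemma UniquelyDecodable.two_pow_mul_choose_le_two_pow_add
    (h : UniquelyDecodable T CodeA CodeB) : 2 ^ n * n.choose T ≤ 2 ^ (mA + mB) := by
  let S : Finset ((Fin n → Bool) × Finset (Fin n)) := univ ×ˢ powersetCard T univ
  have hclose : ∀ p ∈ S, hammingDist p.1 (flipOn p.1 p.2) ≤ T := fun p hp => by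
    rw [hammingDist_flipOn, (mem_powersetCard.1 (mem_product.1 hp).2).2]
  have hinj : Set.InjOn (fun p : (Fin n → Bool) × Finset (Fin n) =>
      (CodeA p.1, CodeB (flipOn p.1 p.2))) S := by
    rintro ⟨x, s⟩ hs ⟨x', t⟩ ht hst
    obtain ⟨hA, hB⟩ := Prod.mk.inj hst
    obtain ⟨rfl, hflip⟩ := Prod.mk.inj (h _ _ _ _ (hclose _ hs) (hclose _ ht) hA hB)
    exact Prod.ext rfl (flipOn_injective x hflip)
  simpa [S, pow_add] using card_le_card_of_injOn _ (fun _ _ => mem_univ _) hinj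

end Counting

section Binomial

def binomialTerm (n k i : ℕ) : ℕ := n.choose i * k ^ i * (n - k) ^ (n - i)

variable {n k i : ℕ}

lemma binomialTerm_succ_mul (hi : i < n) :
    binomialTerm n k (i + 1) * ((i + 1) * (n - k)) = binomialTerm n k i * ((n - i) * k) := by
  have hchoose : n.choose (i + 1) * (i + 1) = n.choose i * (n - i) := Nat.choose_succ_right_eq n i
  have hpow : (n - k) ^ (n - (i + 1)) * (n - k) = (n - k) ^ (n - i) := by
    rw [← pow_succ]; congr 1; omega
  unfold binomialTerm
  calc n.choose (i + 1) * k ^ (i + 1) * (n - k) ^ (n - (i + 1)) * ((i + 1) * (n - k))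
      = (n.choose (i + 1) * (i + 1)) * k ^ (i + 1) * ((n - k) ^ (n - (i + 1)) * (n - k)) := by
        ring
    _ = n.choose i * k ^ i * (n - k) ^ (n - i) * ((n - i) * k) := by
        rw [hchoose, hpow]; ring

lemma binomialTerm_le_succ (hk : k < n) (hi : i < k) :
    binomialTerm n k i ≤ binomialTerm n k (i + 1) := by
  refine Nat.le_of_mul_le_mul_right (c := (i + 1) * (n - k)) ?_
    (Nat.mul_pos i.succ_pos (by omega))
  calc binomialTerm n k i * ((i + 1) * (n - k))
      ≤ binomialTerm n k i * ((n - i) * k) :=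
        Nat.mul_le_mul_left _ ((Nat.mul_le_mul (by omega) (by omega)).trans_eq (mul_comm _ _))
    _ = binomialTerm n k (i + 1) * ((i + 1) * (n - k)) := (binomialTerm_succ_mul (by omega)).symm

lemma binomialTerm_succ_le (hk : k < n) (hki : k ≤ i) (hi : i < n) :
    binomialTerm n k (i + 1) ≤ binomialTerm n k i := by
  refine Nat.le_of_mul_le_mul_right (c := (i + 1) * (n - k)) ?_
    (Nat.mul_pos i.succ_pos (by omega))
  calc binomialTerm n k (i + 1) * ((i + 1) * (n - k))
      = binomialTerm n k i * ((n - i) * k) := binomialTerm_succ_mul hi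
    _ ≤ binomialTerm n k i * ((i + 1) * (n - k)) :=
        Nat.mul_le_mul_left _ ((Nat.mul_le_mul (by omega) (by omega)).trans_eq (mul_comm _ _))

lemma binomialTerm_le_self (hk : k < n) (hi : i ≤ n) :
    binomialTerm n k i ≤ binomialTerm n k k := by
  rcases le_total i k with hik | hki
  · refine monotoneOn_of_le_succ Set.ordConnected_Iic (fun j _ hj hj' => ?_)
      (Set.mem_Iic.2 hik) Set.self_mem_Iic hik
    rw [Order.succ_eq_add_one] at hj' ⊢
    exact binomialTerm_le_succ hk (Set.mem_Iic.1 hj')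
  · refine antitoneOn_of_succ_le Set.ordConnected_Icc (fun j _ hj hj' => ?_)
      (Set.left_mem_Icc.2 hk.le) ⟨hki, hi⟩ hki
    rw [Order.succ_eq_add_one] at hj' ⊢
    exact binomialTerm_succ_le hk hj.1 (Set.mem_Icc.1 hj').2

lemma pow_self_le_succ_mul_binomialTerm (hk : k < n) :
    n ^ n ≤ (n + 1) * binomialTerm n k k := by
  calc n ^ n = ∑ i ∈ range (n + 1), binomialTerm n k i := by
        rw [← congrArg (· ^ n) (Nat.add_sub_of_le hk.le), add_pow]
        exact sum_congr rfl fun i _ => by rw [Nat.cast_id]; unfold binomialTerm; ring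
    _ ≤ #(range (n + 1)) • binomialTerm n k k :=
        sum_le_card_nsmul _ _ _ fun _ hi =>
          binomialTerm_le_self hk (Nat.lt_succ_iff.1 (mem_range.1 hi))
    _ = (n + 1) * binomialTerm n k k := by simp

end Binomial

lemma binEnt_eq_binEntropy_div_log_two (a : ℝ) : binEnt a = binEntropy a / log 2 := by
  simp only [binEnt, binEntropy_eq_negMulLog_add_negMulLog_one_sub, negMulLog, logb]
  ring

lemma continuous_binEnt : Continuous binEnt := by
  simpa only [funext binEnt_eq_binEntropy_div_log_two] using binEntropy_continuous.div_const _

lemma mul_logb_div (b x : ℝ) {y : ℝ} (hy : y ≠ 0) :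
    x * logb b (x / y) = x * logb b x - x * logb b y := by
  rcases eq_or_ne x 0 with rfl | hx
  · simp
  · rw [logb_div hx hy]; ring

lemma mul_binEnt_div {n k : ℝ} (hn : n ≠ 0) :
    n * binEnt (k / n) = n * logb 2 n - k * logb 2 k - (n - k) * logb 2 (n - k) := by
  have h : n * binEnt (k / n) = -(k * logb 2 (k / n)) - (n - k) * logb 2 ((n - k) / n) := by
    rw [binEnt, one_sub_div hn]
    field_simp
  rw [h, mul_logb_div _ _ hn, mul_logb_div _ _ hn]
  ring

lemma logb_two_le_of_le_two_pow {x : ℝ} {m : ℕ} (hx : 0 < x) (h : x ≤ 2 ^ m) :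
    logb 2 x ≤ m := by
  rwa [logb_le_iff_le_rpow one_lt_two hx, rpow_natCast]

lemma mul_binEnt_sub_logb_le_logb_choose {n k : ℕ} (hk : k < n) :
    n * binEnt (k / n) - logb 2 (n + 1) ≤ logb 2 (n.choose k) := by
  have hn : (0 : ℝ) < n := by exact_mod_cast k.zero_le.trans_lt hk
  have hnk : (0 : ℝ) < n - k := sub_pos.2 (by exact_mod_cast hk)
  have hchoose : (0 : ℝ) < n.choose k := by exact_mod_cast Nat.choose_pos hk.le
  have hkk : (0 : ℝ) < (k : ℝ) ^ k := by exact_mod_cast Nat.pow_self_pos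
  have hterm : ((n : ℝ) ^ n) ≤ (n + 1) * (n.choose k * k ^ k * ((n : ℝ) - k) ^ (n - k)) := by
    have := (Nat.cast_le (α := ℝ)).2 (pow_self_le_succ_mul_binomialTerm hk)
    push_cast [binomialTerm, Nat.cast_sub hk.le] at this
    exact this
  have hlog := logb_le_logb_of_le one_lt_two (pow_pos hn n) hterm
  have hck : (0 : ℝ) < n.choose k * k ^ k := mul_pos hchoose hkk
  have hnkp : (0 : ℝ) < ((n : ℝ) - k) ^ (n - k) := pow_pos hnk _
  rw [logb_mul (by positivity) (mul_pos hck hnkp).ne', logb_mul hck.ne' hnkp.ne',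
    logb_mul hchoose.ne' hkk.ne', logb_pow, logb_pow, logb_pow, Nat.cast_sub hk.le] at hlog
  rw [mul_binEnt_div hn.ne']
  linarith

lemma eventually_mul_le_logb_choose_floor {α ε : ℝ} (hα0 : 0 ≤ α) (hα1 : α < 1)
    (hε : 0 < ε) :
    ∀ᶠ n : ℕ in atTop, (binEnt α - ε) * n ≤ logb 2 (n.choose ⌊α * n⌋₊) := by
  have hfloor : Tendsto (fun n : ℕ => (⌊α * n⌋₊ : ℝ) / n) atTop (𝓝 α) :=
    (tendsto_nat_floor_mul_div_atTop hα0).comp tendsto_natCast_atTop_atTop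
  have hlog : Tendsto (fun n : ℕ => logb 2 (n + 1) / n) atTop (𝓝 0) := by
    have := (tendsto_pow_logb_div_mul_add_atTop (b := 2) 1 (-1) 1 one_ne_zero).comp
      (tendsto_atTop_add_const_right _ 1 tendsto_natCast_atTop_atTop)
    exact this.congr fun n => by simp
  have hlim := ((continuous_binEnt.tendsto α).comp hfloor).sub hlog
  rw [sub_zero] at hlim
  filter_upwards [hlim.eventually (eventually_gt_nhds (sub_lt_self _ hε)),
    eventually_gt_atTop 0] with n hgap hn
  have hn' : (0 : ℝ) < n := by exact_mod_cast hn
  have hkn : ⌊α * n⌋₊ < n := (Nat.floor_lt' hn.ne').2 (by nlinarith)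
  calc (binEnt α - ε) * n
      ≤ (binEnt (⌊α * n⌋₊ / n) - logb 2 (n + 1) / n) * n :=
        mul_le_mul_of_nonneg_right hgap.le hn'.le
    _ = n * binEnt (⌊α * n⌋₊ / n) - logb 2 (n + 1) := by field_simp
    _ ≤ logb 2 (n.choose ⌊α * n⌋₊) := mul_binEnt_sub_logb_le_logb_choose hkn

theorem stmt0 (α : ℝ) (hα0 : 0 < α) (hα1 : α < 1 / 2) (ε : ℝ) (hε : 0 < ε) :
    ∃ n₀ : ℕ, ∀ n : ℕ, n₀ ≤ n → ∀ mA mB : ℕ,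
      Achievable n ⌊α * n⌋₊ mA mB →
      ((mA : ℝ) + mB ≥ (1 + binEnt α) * n - ε * n ∧
       (mA : ℝ) ≥ binEnt α * n - ε * n ∧
       (mB : ℝ) ≥ binEnt α * n - ε * n) := by
  obtain ⟨n₀, hn₀⟩ :=
    eventually_atTop.1 (eventually_mul_le_logb_choose_floor hα0.le (by linarith) hε)
  refine ⟨n₀, fun n hn mA mB ⟨CodeA, CodeB, h⟩ => ?_⟩
  have hentropy := hn₀ n hn
  set k := ⌊α * n⌋₊
  have hchoose : (0 : ℝ) < n.choose k := by
    have hαn : α * n ≤ n := mul_le_of_le_one_left n.cast_nonneg (by linarith)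
    exact_mod_cast Nat.choose_pos (Nat.floor_le_of_le hαn)
  have hA := logb_two_le_of_le_two_pow hchoose (by exact_mod_cast h.choose_le_two_pow_left)
  have hB := logb_two_le_of_le_two_pow hchoose (by exact_mod_cast h.choose_le_two_pow_right)
  have hAB : n + logb 2 (n.choose k) ≤ mA + mB := by
    have := logb_two_le_of_le_two_pow (by positivity : (0 : ℝ) < 2 ^ n * n.choose k)
      (by exact_mod_cast h.two_pow_mul_choose_le_two_pow_add)
    rwa [logb_mul (by positivity) hchoose.ne', logb_pow, logb_self_eq_one one_lt_two, mul_one,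
      Nat.cast_add] at this
  exact ⟨by linarith, by linarith, by linarith⟩
end

section
/- (Binary Johnson bound.) Let α ∈ (0, 1/4) and put α' = (1 − √(1 − 4α))/2. For every n ≥ 1: if v_1, …, v_{2n+1} is any list of 2n+1 binary strings of length n, each of Hamming weight at most α'·n, then there exist indices i ≠ j such that dist(v_i, v_j) ≤ 2αn. -/
/-!
Shift every string by `α'`: `u i := 𝟙(v i) - α' • 𝟙 ∈ ℝⁿ`. Coordinatewise,
`⟪u i, u j⟫ = (1/2 - α') (wt vᵢ + wt vⱼ) - dist(vᵢ, vⱼ)/2 + α'² n ≤ α'(1 - α') n - dist(vᵢ, vⱼ)/2`,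
and `α'` is the root of `t (1 - t) = α` below `1/2`, so this is `α n - dist(vᵢ, vⱼ)/2`. If all
pairwise distances exceeded `2αn`, the `2n+1` vectors `u i` would be pairwise obtuse, but `ℝⁿ`
holds at most `n + 1` pairwise obtuse vectors.
-/

open scoped RealInnerProductSpace
open Finset

section ObtuseFamily

variable {E : Type*} [NormedAddCommGroup E] [InnerProductSpace ℝ E]

theorem linearIndependent_of_pairwise_inner_nonpos_of_inner_neg {ι : Type*} [Fintype ι]
    {w : ι → E} (hw : Pairwise fun i j => ⟪w i, w j⟫ ≤ 0) {x : E} (hx : ∀ i, ⟪w i, x⟫ < 0) :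
    LinearIndependent ℝ w := by
  rw [Fintype.linearIndependent_iff]
  intro g hg
  -- Split `g = a - b` into parts of disjoint supports: `z = ∑ a i • w i = ∑ b i • w i` then has
  -- `⟪z, z⟫ ≤ 0`, and pairing `z = 0` with `x` forces `a = b = 0`.
  set a : ι → ℝ := fun i => max (g i) 0
  set b : ι → ℝ := fun i => max (-g i) 0
  have hg_eq : ∀ i, g i = a i - b i := fun i => by simp only [a, b]; grind
  have hab : ∀ i, a i * b i = 0 := fun i => by simp only [a, b]; grind
  have hz : ∑ i, a i • w i = ∑ i, b i • w i := by
    simp only [hg_eq, sub_smul, sum_sub_distrib] at hg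
    exact sub_eq_zero.1 hg
  have hz0 : ∑ i, a i • w i = 0 := by
    rw [← real_inner_self_nonpos]
    calc ⟪∑ i, a i • w i, ∑ i, a i • w i⟫ = ⟪∑ i, a i • w i, ∑ j, b j • w j⟫ := by rw [← hz]
      _ = ∑ i, ∑ j, a i * b j * ⟪w i, w j⟫ := by
        simp_rw [sum_inner, real_inner_smul_left, inner_sum, real_inner_smul_right, mul_sum,
          mul_assoc]
      _ ≤ 0 := sum_nonpos fun i _ => sum_nonpos fun j _ => by
        rcases eq_or_ne i j with rfl | hij
        · rw [hab, zero_mul]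
        · exact mul_nonpos_of_nonneg_of_nonpos
            (mul_nonneg (le_max_right _ _) (le_max_right _ _)) (hw hij)
  have hzero : ∀ c : ι → ℝ, (∀ i, 0 ≤ c i) → ∑ i, c i • w i = 0 → ∀ i, c i = 0 := by
    intro c hc hcw i
    have hsum : ∑ i, c i * ⟪w i, x⟫ = 0 := by
      simp only [← real_inner_smul_left, ← sum_inner, hcw, inner_zero_left]
    have hterm := (sum_eq_zero_iff_of_nonpos fun i _ =>
      mul_nonpos_of_nonneg_of_nonpos (hc i) (hx i).le).1 hsum i (mem_univ i)
    exact (mul_eq_zero.1 hterm).resolve_right (hx i).ne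
  intro i
  rw [hg_eq, hzero a (fun _ => le_max_right _ _) hz0 i,
    hzero b (fun _ => le_max_right _ _) (hz ▸ hz0) i, sub_zero]

theorem card_le_finrank_add_one_of_pairwise_inner_neg [FiniteDimensional ℝ E]
    {ι : Type*} [Fintype ι] {w : ι → E} (hw : Pairwise fun i j => ⟪w i, w j⟫ < 0) :
    Fintype.card ι ≤ Module.finrank ℝ E + 1 := by
  classical
  rcases isEmpty_or_nonempty ι with hι | ⟨⟨i₀⟩⟩
  · simp
  have hli : LinearIndependent ℝ fun i : {i | i ≠ i₀} => w i :=
    linearIndependent_of_pairwise_inner_nonpos_of_inner_neg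
      (fun i j hij => (hw (Subtype.coe_injective.ne hij)).le) (x := w i₀) fun i => hw i.2
  have hcard := hli.fintype_card_le_finrank
  rw [Set.card_ne_eq] at hcard
  omega

end ObtuseFamily

theorem hammingDist_eq_sum_ite {ι R : Type*} {β : ι → Type*} [Fintype ι] [∀ i, DecidableEq (β i)]
    [AddCommMonoidWithOne R] (x y : ∀ i, β i) :
    (hammingDist x y : R) = ∑ i, if x i = y i then 0 else 1 := by
  rw [hammingDist, card_filter, Nat.cast_sum]
  refine sum_congr rfl fun i _ => ?_
  split_ifs <;> simp_all

section ShiftedIndicator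

variable {ι : Type*} [Fintype ι]

noncomputable def shiftedIndicator (a : ℝ) (x : ι → Bool) : EuclideanSpace ℝ ι :=
  WithLp.toLp 2 fun k => (if x k then 1 else 0) - a

theorem inner_shiftedIndicator (a : ℝ) (x y : ι → Bool) :
    ⟪shiftedIndicator a x, shiftedIndicator a y⟫ =
      (1 / 2 - a) * (hammingDist x (fun _ => false) + hammingDist y (fun _ => false))
        - hammingDist x y / 2 + a ^ 2 * Fintype.card ι := by
  simp only [shiftedIndicator, PiLp.inner_apply, hammingDist_eq_sum_ite (R := ℝ),
    mul_sum, sum_div, ← sum_add_distrib, ← sum_sub_distrib, Fintype.card_eq_sum_ones,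
    Nat.cast_sum, Nat.cast_one]
  refine sum_congr rfl fun k _ => ?_
  cases x k <;> cases y k <;> simp <;> ring

theorem inner_shiftedIndicator_le {a : ℝ} (ha : a ≤ 1 / 2) {x y : ι → Bool}
    (hx : (hammingDist x (fun _ => false) : ℝ) ≤ a * Fintype.card ι)
    (hy : (hammingDist y (fun _ => false) : ℝ) ≤ a * Fintype.card ι) :
    ⟪shiftedIndicator a x, shiftedIndicator a y⟫ ≤
      a * (1 - a) * Fintype.card ι - hammingDist x y / 2 := by
  rw [inner_shiftedIndicator]
  nlinarith [mul_le_mul_of_nonneg_left (add_le_add hx hy) (sub_nonneg.2 ha)]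

end ShiftedIndicator

theorem stmt2_general (α : ℝ) (hα1 : α < 1 / 4)
    (α' : ℝ) (hα' : α' = (1 - Real.sqrt (1 - 4 * α)) / 2)
    (n : ℕ) (hn : 1 ≤ n)
    (v : Fin (2 * n + 1) → (Fin n → Bool))
    (hw : ∀ i, (hammingDist (v i) (fun _ => false) : ℝ) ≤ α' * n) :
    ∃ i j, i ≠ j ∧ (hammingDist (v i) (v j) : ℝ) ≤ 2 * α * n := by
  by_contra! hfar
  have hsqrt := Real.sq_sqrt (by linarith : (0 : ℝ) ≤ 1 - 4 * α)
  have hα'_le : α' ≤ 1 / 2 := by rw [hα']; linarith [Real.sqrt_nonneg (1 - 4 * α)]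
  have hα'_mul : α' * (1 - α') = α := by rw [hα']; nlinarith
  have hobtuse : Pairwise fun i j => ⟪shiftedIndicator α' (v i), shiftedIndicator α' (v j)⟫ < 0 := by
    intro i j hij
    have := inner_shiftedIndicator_le hα'_le (by rw [Fintype.card_fin]; exact hw i)
      (by rw [Fintype.card_fin]; exact hw j)
    simp only [Fintype.card_fin, hα'_mul] at this
    linarith [hfar i j hij]
  have hcard := card_le_finrank_add_one_of_pairwise_inner_neg hobtuse
  rw [Fintype.card_fin, finrank_euclideanSpace_fin] at hcard
  omega

/-- Binary Johnson bound: among `2n+1` binary strings of length `n`, each of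
Hamming weight at most `α'·n` (where `α' = (1 − √(1 − 4α))/2`), some two are at
Hamming distance at most `2αn`. -/
theorem stmt2 (α : ℝ) (hα0 : 0 < α) (hα1 : α < 1 / 4)
    (α' : ℝ) (hα' : α' = (1 - Real.sqrt (1 - 4 * α)) / 2)
    (n : ℕ) (hn : 1 ≤ n)
    (v : Fin (2 * n + 1) → (Fin n → Bool))
    (hw : ∀ i, (hammingDist (v i) (fun _ => false) : ℝ) ≤ α' * n) :
    ∃ i j, i ≠ j ∧ (hammingDist (v i) (v j) : ℝ) ≤ 2 * α * n :=
  stmt2_general α hα1 α' hα' n hn v hw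
end

section
/- For every α ∈ (0, 1/4) and every ε > 0 there exists n₀ such that for all n ≥ n₀, every pair of integers (m_A, m_B) satisfying m_A + m_B ≥ (1 + h(2α) + ε)·n, m_A ≥ (h(2α) + ε)·n, and m_B ≥ (h(2α) + ε)·n is achievable for the deterministic combinatorial Slepian–Wolf scheme with parameters (n, ⌊αn⌋); moreover, achievability can be witnessed by a pair of encodings both of which are 𝔽₂-linear. -/
/-- Identification of `{0,1}` with the field `𝔽₂`. -/
def toF2 {n : ℕ} (x : Fin n → Bool) : Fin n → ZMod 2 := fun i => if x i then 1 else 0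

/-- An encoding map is linear if, under the identification of `{0,1}` with `𝔽₂`,
it is given by an `𝔽₂`-linear map `𝔽₂ⁿ → 𝔽₂^m`. -/
def IsLinearEncoding {n m : ℕ} (C : (Fin n → Bool) → (Fin m → Bool)) : Prop :=
  ∃ f : (Fin n → ZMod 2) →ₗ[ZMod 2] (Fin m → ZMod 2),
    ∀ x, toF2 (C x) = f (toF2 x)

/-!
A linear Slepian–Wolf code comes from two subspaces `K_A, K_B ⊆ 𝔽₂ⁿ` of dimensions `n - m_A`
and `n - m_B` whose sum is direct and meets the Hamming ball of radius `2T` only in `0`: if the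
kernels of linear maps `f_A, f_B` lie in `K_A, K_B`, two admissible pairs with the same codewords
differ by some `(u, v) ∈ K_A × K_B` with `u + v` of weight at most `2T`, forcing `u = v = 0`.
The greedy Gilbert–Varshamov argument produces such subspaces as soon as
`2^(dim K_A + dim K_B) · |B(2T)| ≤ 2ⁿ`. For `2k ≤ n` and `p = k/n`,
`|B(k)| · pᵏ (1-p)^(n-k) ≤ Σ_v p^|v| (1-p)^(n-|v|) = 1` gives `|B(k)| ≤ 2^(h(k/n)·n)` exactly,
so the rate conditions suffice for every `n` and `n₀ = 0` works.
-/

open Finset Module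

theorem exists_linearMap_preimage_subset_zero {F V : Type*} [Field F] [Fintype F]
    [AddCommGroup V] [Module F V] [Fintype V] {S : Finset V} (hS : 0 ∈ S) :
    ∀ d : ℕ, Fintype.card F ^ d * #S ≤ Fintype.card V →
      ∃ ι : (Fin d → F) →ₗ[F] V, ∀ w, ι w ∈ S → w = 0 := by
  classical
  intro d
  induction d with
  | zero => exact fun _ => ⟨0, fun w _ => Subsingleton.elim w 0⟩
  | succ d ih =>
    intro hcard
    have hq : 1 < Fintype.card F := Fintype.one_lt_card
    obtain ⟨ι, hι⟩ := ih (le_trans (Nat.mul_le_mul_right _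
      (Nat.pow_le_pow_right (by omega) d.le_succ)) hcard)
    -- a new vector `x` may be added unless `x ∈ c • S + range ι` for some `c ≠ 0`
    let bad := ((univ.erase (0 : F)) ×ˢ (univ ×ˢ S)).image
      fun p : F × (Fin d → F) × V => p.1 • p.2.2 + ι p.2.1
    have hbad : #bad < Fintype.card V := calc
      #bad ≤ #(univ.erase (0 : F)) * (Fintype.card F ^ d * #S) := by
        refine card_image_le.trans ?_
        simp [card_product]
      _ < Fintype.card F * (Fintype.card F ^ d * #S) := by
        have hpos : 0 < Fintype.card F ^ d * #S :=
          Nat.mul_pos (by positivity) (card_pos.2 ⟨0, hS⟩)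
        exact Nat.mul_lt_mul_of_pos_right (card_lt_card (erase_ssubset (mem_univ 0))) hpos
      _ ≤ Fintype.card V := by rwa [← mul_assoc, ← pow_succ']
    obtain ⟨x, -, hx⟩ :=
      exists_mem_notMem_of_card_lt_card (s := bad) (t := univ) (by simpa using hbad)
    refine ⟨(LinearMap.proj 0).smulRight x + ι ∘ₗ LinearMap.funLeft F F Fin.succ, fun w hw => ?_⟩
    simp only [LinearMap.add_apply, LinearMap.smulRight_apply, LinearMap.proj_apply,
      LinearMap.comp_apply] at hw
    set t := LinearMap.funLeft F F Fin.succ w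
    by_cases hw0 : w 0 = 0
    · rw [hw0, zero_smul, zero_add] at hw
      exact funext fun i => Fin.cases hw0 (congrFun (hι t hw)) i
    · refine absurd (mem_image.2 ⟨((w 0)⁻¹, -((w 0)⁻¹ • t), w 0 • x + ι t), ?_, ?_⟩) hx
      · simp [hw0, hw]
      · simp [smul_add, smul_smul, hw0]

theorem exists_linearMap_ker_le {F V : Type*} [Field F] [AddCommGroup V] [Module F V]
    [FiniteDimensional F V] (K : Submodule F V) {m : ℕ} (h : finrank F V ≤ m + finrank F K) :
    ∃ f : V →ₗ[F] (Fin m → F), LinearMap.ker f ≤ K := by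
  have hQ : finrank F (V ⧸ K) ≤ finrank F (Fin m → F) := by
    have := K.finrank_quotient_add_finrank
    simp only [finrank_fin_fun]
    omega
  obtain ⟨g, hg⟩ := finrank_le_iff_exists_linearMap.1 hQ
  refine ⟨g ∘ₗ K.mkQ, ?_⟩
  rw [LinearMap.ker_comp_of_ker_eq_bot _ (LinearMap.ker_eq_bot.2 hg), Submodule.ker_mkQ]

theorem exists_linearMap_pair_eq_zero_of_add_mem {F V : Type*} [Field F] [Fintype F]
    [AddCommGroup V] [Module F V] [Fintype V] {S : Finset V} (hS : 0 ∈ S)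
    {mA mB a b : ℕ} (hA : finrank F V ≤ mA + a) (hB : finrank F V ≤ mB + b)
    (hcard : Fintype.card F ^ (a + b) * #S ≤ Fintype.card V) :
    ∃ (fA : V →ₗ[F] (Fin mA → F)) (fB : V →ₗ[F] (Fin mB → F)),
      ∀ u ∈ LinearMap.ker fA, ∀ v ∈ LinearMap.ker fB, u + v ∈ S → u = 0 ∧ v = 0 := by
  obtain ⟨ι, hι⟩ := exists_linearMap_preimage_subset_zero hS (a + b) hcard
  let e : ((Fin a → F) × (Fin b → F)) ≃ₗ[F] (Fin (a + b) → F) :=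
    (LinearEquiv.sumArrowLequivProdArrow _ _ F F).symm ≪≫ₗ
      (LinearEquiv.funCongrLeft F F finSumFinEquiv).symm
  let ιA := ι ∘ₗ e.toLinearMap ∘ₗ LinearMap.inl F _ _
  let ιB := ι ∘ₗ e.toLinearMap ∘ₗ LinearMap.inr F _ _
  have hιAB : ∀ s t, ιA s + ιB t ∈ S → s = 0 ∧ t = 0 := by
    intro s t hst
    have : e (s, t) = 0 := hι _ (by simpa [ιA, ιB, ← map_add] using hst)
    simpa using this
  have hinjA : Function.Injective ιA := by
    refine (injective_iff_map_eq_zero ιA).2 fun s hs => (hιAB s 0 ?_).1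
    simpa [hs] using hS
  have hinjB : Function.Injective ιB := by
    refine (injective_iff_map_eq_zero ιB).2 fun t ht => (hιAB 0 t ?_).2
    simpa [ht] using hS
  obtain ⟨fA, hfA⟩ := exists_linearMap_ker_le (LinearMap.range ιA) (m := mA)
    (by rwa [LinearMap.finrank_range_of_inj hinjA, finrank_fin_fun])
  obtain ⟨fB, hfB⟩ := exists_linearMap_ker_le (LinearMap.range ιB) (m := mB)
    (by rwa [LinearMap.finrank_range_of_inj hinjB, finrank_fin_fun])
  refine ⟨fA, fB, fun u hu v hv huv => ?_⟩
  obtain ⟨s, rfl⟩ := hfA hu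
  obtain ⟨t, rfl⟩ := hfB hv
  obtain ⟨rfl, rfl⟩ := hιAB s t huv
  simp

theorem eq_and_eq_of_sub_sub_mem {R V WA WB : Type*} [Semiring R] [AddCommGroup V] [Module R V]
    [AddCommGroup WA] [Module R WA] [AddCommGroup WB] [Module R WB]
    {fA : V →ₗ[R] WA} {fB : V →ₗ[R] WB} {S : Set V}
    (h : ∀ u ∈ LinearMap.ker fA, ∀ v ∈ LinearMap.ker fB, u + v ∈ S → u = 0 ∧ v = 0)
    {x y x' y' : V} (hS : x - y - (x' - y') ∈ S) (hA : fA x = fA x') (hB : fB y = fB y') :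
    x = x' ∧ y = y' := by
  have hu : x - x' ∈ LinearMap.ker fA := by rw [LinearMap.mem_ker, map_sub, hA, sub_self]
  have hv : y' - y ∈ LinearMap.ker fB := by rw [LinearMap.mem_ker, map_sub, hB, sub_self]
  have := h _ hu _ hv (by convert hS using 1; abel)
  exact ⟨sub_eq_zero.1 this.1, (sub_eq_zero.1 this.2).symm⟩

theorem hammingNorm_sub_le {ι : Type*} [Fintype ι] {β : ι → Type*} [∀ i, AddCommGroup (β i)]
    [∀ i, DecidableEq (β i)] (a b : ∀ i, β i) :
    hammingNorm (a - b) ≤ hammingNorm a + hammingNorm b := by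
  rw [← neg_add_eq_sub, ← hammingDist_eq_hammingNorm, ← hammingDist_zero_right a,
    ← hammingDist_zero_right b, add_comm]
  exact hammingDist_triangle_right b a 0

section HammingBall

variable {ι β : Type*} [Fintype ι] [DecidableEq ι] [Fintype β] [Zero β] [DecidableEq β]

variable (ι β) in
def hammingBall (r : ℕ) : Finset (ι → β) :=
  {v | hammingNorm v ≤ r}

theorem mem_hammingBall {r : ℕ} {v : ι → β} : v ∈ hammingBall ι β r ↔ hammingNorm v ≤ r := by
  simp [hammingBall]

theorem zero_mem_hammingBall (r : ℕ) : 0 ∈ hammingBall ι β r :=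
  mem_hammingBall.2 (hammingNorm_zero.trans_le r.zero_le)

end HammingBall

theorem prod_ite_eq_zero_eq_pow_hammingNorm {ι β R : Type*} [Fintype ι] [Zero β] [DecidableEq β]
    [CommMonoid R] (p q : R) (v : ι → β) :
    ∏ i, (if v i = 0 then q else p) = q ^ (Fintype.card ι - hammingNorm v) * p ^ hammingNorm v := by
  rw [prod_ite, prod_const, prod_const]
  have h := card_filter_add_card_filter_not (s := univ) (fun i => v i = 0)
  rw [card_univ] at h
  simp only [hammingNorm, ← h, ne_eq, Nat.add_sub_cancel]

theorem sum_pow_mul_pow_hammingNorm_eq_add_pow {ι R : Type*} [Fintype ι] [DecidableEq ι]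
    [CommSemiring R] (p q : R) :
    ∑ v : ι → ZMod 2, q ^ (Fintype.card ι - hammingNorm v) * p ^ hammingNorm v =
      (q + p) ^ Fintype.card ι := by
  have hsum : ∑ a : ZMod 2, (if a = 0 then q else p) = q + p := by
    simp [sum_ite, filter_eq', filter_ne']
  calc ∑ v : ι → ZMod 2, q ^ (Fintype.card ι - hammingNorm v) * p ^ hammingNorm v
      = ∑ v : ι → ZMod 2, ∏ i, (if v i = 0 then q else p) := by
        simp_rw [prod_ite_eq_zero_eq_pow_hammingNorm]
    _ = ∏ _i : ι, ∑ a : ZMod 2, (if a = 0 then q else p) :=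
        (Fintype.prod_sum fun (_ : ι) (a : ZMod 2) => if a = 0 then q else p).symm
    _ = (q + p) ^ Fintype.card ι := by rw [hsum, prod_const, card_univ]

theorem card_hammingBall_mul_le_one {ι : Type*} [Fintype ι] [DecidableEq ι] {p : ℝ}
    (hp0 : 0 ≤ p) (hp : p ≤ 1 / 2) {k : ℕ} (hk : k ≤ Fintype.card ι) :
    (#(hammingBall ι (ZMod 2) k) : ℝ) * ((1 - p) ^ (Fintype.card ι - k) * p ^ k) ≤ 1 := by
  set n := Fintype.card ι
  have hpq : p ≤ 1 - p := by linarith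
  have hq : 0 ≤ 1 - p := by linarith
  -- as `p ≤ 1 - p`, each vector of the ball has probability at least `(1 - p) ^ (n - k) * p ^ k`
  have hmono : ∀ w ≤ k, (1 - p) ^ (n - k) * p ^ k ≤ (1 - p) ^ (n - w) * p ^ w := by
    intro w hw
    calc (1 - p) ^ (n - k) * p ^ k = (1 - p) ^ (n - k) * p ^ (k - w) * p ^ w := by
          rw [mul_assoc, ← pow_add, Nat.sub_add_cancel hw]
      _ ≤ (1 - p) ^ (n - k) * (1 - p) ^ (k - w) * p ^ w := by gcongr
      _ = (1 - p) ^ (n - w) * p ^ w := by rw [← pow_add]; congr 2; omega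
  calc (#(hammingBall ι (ZMod 2) k) : ℝ) * ((1 - p) ^ (n - k) * p ^ k)
      = ∑ _v ∈ hammingBall ι (ZMod 2) k, (1 - p) ^ (n - k) * p ^ k := by
        rw [sum_const, nsmul_eq_mul]
    _ ≤ ∑ v ∈ hammingBall ι (ZMod 2) k, (1 - p) ^ (n - hammingNorm v) * p ^ hammingNorm v :=
        sum_le_sum fun v hv => hmono _ (mem_hammingBall.1 hv)
    _ ≤ ∑ v : ι → ZMod 2, (1 - p) ^ (n - hammingNorm v) * p ^ hammingNorm v :=
        sum_le_sum_of_subset_of_nonneg (subset_univ _) fun v _ _ => by positivity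
    _ = 1 := by rw [sum_pow_mul_pow_hammingNorm_eq_add_pow, sub_add_cancel, one_pow]

theorem binEnt_eq_binEntropy_div_log_two_s6 (p : ℝ) :
    binEnt p = Real.binEntropy p / Real.log 2 := by
  simp only [binEnt, Real.binEntropy, Real.logb, Real.log_inv]
  ring

theorem binEnt_le_one (p : ℝ) : binEnt p ≤ 1 := by
  rw [binEnt_eq_binEntropy_div_log_two_s6, div_le_one (Real.log_pos one_lt_two)]
  exact Real.binEntropy_le_log_two

theorem binEnt_monotoneOn : MonotoneOn binEnt (Set.Icc 0 2⁻¹) := by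
  intro a ha b hb hab
  rw [binEnt_eq_binEntropy_div_log_two_s6, binEnt_eq_binEntropy_div_log_two_s6]
  exact div_le_div_of_nonneg_right (Real.binEntropy_strictMonoOn.monotoneOn ha hb hab)
    (Real.log_nonneg one_le_two)

theorem binEnt_div_le {k n : ℕ} {p : ℝ} (hkn : 2 * k ≤ n) (hk : (k : ℝ) ≤ p * n) (hp0 : 0 ≤ p)
    (hp : p ≤ 2⁻¹) : binEnt (k / n) ≤ binEnt p := by
  have hkn' : (k : ℝ) ≤ 2⁻¹ * n := by
    have : ((2 * k : ℕ) : ℝ) ≤ n := by exact_mod_cast hkn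
    push_cast at this
    linarith
  exact binEnt_monotoneOn ⟨by positivity, div_le_of_le_mul₀ n.cast_nonneg (by norm_num) hkn'⟩
    ⟨hp0, hp⟩ (div_le_of_le_mul₀ n.cast_nonneg hp0 hk)

theorem one_sub_pow_mul_pow_eq_two_rpow {n k : ℕ} (hk0 : 0 < k) (hkn : k < n) :
    (1 - k / n : ℝ) ^ (n - k) * (k / n : ℝ) ^ k = 2 ^ (-(binEnt (k / n) * n)) := by
  have hn : (0 : ℝ) < n := by exact_mod_cast hk0.trans hkn
  have hp : (0 : ℝ) < k / n := by positivity
  have hq : (0 : ℝ) < 1 - k / n := by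
    rw [sub_pos, div_lt_one hn]; exact_mod_cast hkn
  rw [← Real.rpow_logb two_pos (by norm_num) (by positivity : (0 : ℝ) < _ * _)]
  congr 1
  rw [Real.logb_mul (by positivity) (by positivity), Real.logb_pow, Real.logb_pow,
    Nat.cast_sub hkn.le, binEnt]
  field_simp
  ring

theorem card_hammingBall_le_two_rpow {ι : Type*} [Fintype ι] [DecidableEq ι] {k : ℕ}
    (hk : 2 * k ≤ Fintype.card ι) :
    (#(hammingBall ι (ZMod 2) k) : ℝ) ≤ 2 ^ (binEnt (k / Fintype.card ι) * Fintype.card ι) := by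
  set n := Fintype.card ι
  rcases Nat.eq_zero_or_pos k with rfl | hk0
  · simpa [binEnt] using
      card_hammingBall_mul_le_one (ι := ι) le_rfl (by norm_num) (Nat.zero_le n)
  · have hkn : k < n := by omega
    have hp : (k / n : ℝ) ≤ 1 / 2 := by
      rw [div_le_iff₀ (by exact_mod_cast hk0.trans hkn)]
      have : (2 * k : ℝ) ≤ n := by exact_mod_cast hk
      linarith
    have := card_hammingBall_mul_le_one (ι := ι) (by positivity) hp hkn.le
    rw [one_sub_pow_mul_pow_eq_two_rpow hk0 hkn, Real.rpow_neg zero_le_two,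
      ← div_eq_mul_inv, div_le_one (by positivity)] at this
    exact this

def ofF2 {m : ℕ} (v : Fin m → ZMod 2) : Fin m → Bool := fun i => v i = 1

theorem toF2_ofF2 {m : ℕ} (v : Fin m → ZMod 2) : toF2 (ofF2 v) = v := by
  funext i
  rcases (by decide : ∀ a : ZMod 2, a = 0 ∨ a = 1) (v i) with h | h <;> simp [toF2, ofF2, h]

theorem bool_ite_one_zero_injective :
    Function.Injective fun b : Bool => if b then (1 : ZMod 2) else 0 := by
  decide

theorem toF2_injective {n : ℕ} : Function.Injective (toF2 (n := n)) :=
  fun _ _ h => funext fun i => bool_ite_one_zero_injective (congrFun h i)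

theorem hammingDist_toF2 {n : ℕ} (x y : Fin n → Bool) :
    hammingDist (toF2 x) (toF2 y) = hammingDist x y :=
  hammingDist_comp (fun _ (b : Bool) => if b then (1 : ZMod 2) else 0)
    fun _ => bool_ite_one_zero_injective

theorem hammingNorm_toF2_sub {n : ℕ} (x y : Fin n → Bool) :
    hammingNorm (toF2 x - toF2 y) = hammingDist x y := by
  rw [← neg_add_eq_sub, ← hammingDist_eq_hammingNorm, hammingDist_toF2, hammingDist_comm]

theorem exists_uniquelyDecodable_of_ker {n mA mB T : ℕ}
    (fA : (Fin n → ZMod 2) →ₗ[ZMod 2] (Fin mA → ZMod 2))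
    (fB : (Fin n → ZMod 2) →ₗ[ZMod 2] (Fin mB → ZMod 2))
    (h : ∀ u ∈ LinearMap.ker fA, ∀ v ∈ LinearMap.ker fB, hammingNorm (u + v) ≤ 2 * T →
      u = 0 ∧ v = 0) :
    ∃ (CodeA : (Fin n → Bool) → (Fin mA → Bool)) (CodeB : (Fin n → Bool) → (Fin mB → Bool)),
      UniquelyDecodable T CodeA CodeB ∧ IsLinearEncoding CodeA ∧ IsLinearEncoding CodeB := by
  refine ⟨fun x => ofF2 (fA (toF2 x)), fun y => ofF2 (fB (toF2 y)), ?_,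
    ⟨fA, fun _ => toF2_ofF2 _⟩, ⟨fB, fun _ => toF2_ofF2 _⟩⟩
  intro x y x' y' hxy hxy' hA hB
  have hS : hammingNorm (toF2 x - toF2 y - (toF2 x' - toF2 y')) ≤ 2 * T := by
    refine (hammingNorm_sub_le (toF2 x - toF2 y) (toF2 x' - toF2 y')).trans ?_
    rw [hammingNorm_toF2_sub, hammingNorm_toF2_sub]
    omega
  obtain ⟨hx, hy⟩ := eq_and_eq_of_sub_sub_mem (S := {w | hammingNorm w ≤ 2 * T}) h hS
    (by simpa [toF2_ofF2] using congrArg toF2 hA) (by simpa [toF2_ofF2] using congrArg toF2 hB)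
  rw [toF2_injective hx, toF2_injective hy]

theorem cast_sub_add_cast_sub_add_mul_le {n mA mB : ℕ} {r : ℝ} (hr : r ≤ 1)
    (hsum : (1 + r) * n ≤ mA + mB) (hA : r * n ≤ mA) (hB : r * n ≤ mB) :
    ((n - mA + (n - mB) : ℕ) : ℝ) + r * n ≤ n := by
  have hn : (0 : ℝ) ≤ n := Nat.cast_nonneg n
  rcases le_total mA n with hmA | hmA <;> rcases le_total mB n with hmB | hmB <;>
    simp only [Nat.cast_add, Nat.cast_sub, Nat.sub_eq_zero_of_le, Nat.cast_zero, hmA, hmB] <;>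
    nlinarith

theorem two_pow_mul_le_two_pow {d n c : ℕ} {x : ℝ} (hc : (c : ℝ) ≤ 2 ^ x) (h : d + x ≤ n) :
    2 ^ d * c ≤ 2 ^ n := by
  have : ((2 ^ d * c : ℕ) : ℝ) ≤ (2 ^ n : ℕ) := by
    push_cast
    calc (2 : ℝ) ^ d * c ≤ 2 ^ (d : ℝ) * 2 ^ x := by rw [Real.rpow_natCast]; gcongr
      _ = 2 ^ ((d : ℝ) + x) := (Real.rpow_add two_pos _ _).symm
      _ ≤ 2 ^ (n : ℝ) := Real.rpow_le_rpow_of_exponent_le one_le_two h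
      _ = 2 ^ n := Real.rpow_natCast _ _
  exact_mod_cast this

theorem stmt6 (α : ℝ) (hα0 : 0 < α) (hα1 : α < 1 / 4) (ε : ℝ) (hε : 0 < ε) :
    ∃ n₀ : ℕ, ∀ n : ℕ, n₀ ≤ n → ∀ mA mB : ℕ,
      (mA : ℝ) + mB ≥ (1 + binEnt (2 * α) + ε) * n →
      (mA : ℝ) ≥ (binEnt (2 * α) + ε) * n →
      (mB : ℝ) ≥ (binEnt (2 * α) + ε) * n →
      ∃ (CodeA : (Fin n → Bool) → (Fin mA → Bool))
        (CodeB : (Fin n → Bool) → (Fin mB → Bool)),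
        UniquelyDecodable ⌊α * n⌋₊ CodeA CodeB ∧
        IsLinearEncoding CodeA ∧ IsLinearEncoding CodeB := by
  refine ⟨0, fun n _ mA mB hsum hA hB => ?_⟩
  set k := 2 * ⌊α * n⌋₊
  have hk : (k : ℝ) ≤ 2 * α * n := by
    have := Nat.floor_le (by positivity : 0 ≤ α * n)
    push_cast [k]
    linarith
  have h2k : 2 * k ≤ n := by
    have : ((2 * k : ℕ) : ℝ) ≤ n := by push_cast; nlinarith
    exact_mod_cast this
  set r := binEnt (k / n)
  have hr : r ≤ binEnt (2 * α) := binEnt_div_le h2k hk (by positivity) (by linarith)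
  have hrn : r * n ≤ (binEnt (2 * α) + ε) * n :=
    mul_le_mul_of_nonneg_right (by linarith) (Nat.cast_nonneg n)
  have hdim : ((n - mA + (n - mB) : ℕ) : ℝ) + r * n ≤ n :=
    cast_sub_add_cast_sub_add_mul_le (binEnt_le_one _) (by linarith) (by linarith) (by linarith)
  have hball := card_hammingBall_le_two_rpow (ι := Fin n) (k := k) (by simpa using h2k)
  rw [Fintype.card_fin] at hball
  have hcount : 2 ^ (n - mA + (n - mB)) * #(hammingBall (Fin n) (ZMod 2) k) ≤
      Fintype.card (Fin n → ZMod 2) := by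
    simpa using two_pow_mul_le_two_pow hball hdim
  have hrankA : finrank (ZMod 2) (Fin n → ZMod 2) ≤ mA + (n - mA) := by
    rw [finrank_fin_fun]; omega
  have hrankB : finrank (ZMod 2) (Fin n → ZMod 2) ≤ mB + (n - mB) := by
    rw [finrank_fin_fun]; omega
  obtain ⟨fA, fB, hker⟩ := exists_linearMap_pair_eq_zero_of_add_mem
    (zero_mem_hammingBall k) hrankA hrankB hcount
  exact exists_uniquelyDecodable_of_ker fA fB fun u hu v hv huv =>
    hker u hu v hv (mem_hammingBall.2 huv)
end

section
/- There exist a real d > 0 and a function δ : ℕ → ℝ with δ(n)/n → 0 as n → ∞ such that for every real α with 0 < α < 1/2 and every integer n ≥ 1, every pair of integers (m_A, m_B) satisfying m_A + m_B ≥ (1 + h(α))·n + δ(n), m_A ≥ h(α)·n + δ(n), and m_B ≥ h(α)·n + δ(n) is achievable for the randomized combinatorial Slepian–Wolf scheme with parameters (n, ⌊αn⌋, 2^{−n^d}), i.e., there exists a randomized protocol with these message lengths and error probability at most 2^{−n^d}. -/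
/-- A triple of maps forms a randomized protocol for the combinatorial
Slepian–Wolf scheme with parameters `(n, T, ε)`: for each pair of inputs at
Hamming distance at most `T`, decoding succeeds with probability greater than
`1 − ε` over the three independent uniform random strings `r_A, r_B, r_C`. -/
def RandProtocol (n T R mA mB : ℕ)
    (CodeA : (Fin n → Bool) → (Fin R → Bool) → (Fin mA → Bool))
    (CodeB : (Fin n → Bool) → (Fin R → Bool) → (Fin mB → Bool))
    (Decode : (Fin mA → Bool) → (Fin mB → Bool) → (Fin R → Bool) →
      (Fin n → Bool) × (Fin n → Bool)) (ε : ℝ) : Prop :=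
  ∀ x y : Fin n → Bool, hammingDist x y ≤ T →
    ((Finset.univ.filter
        (fun r : (Fin R → Bool) × (Fin R → Bool) × (Fin R → Bool) =>
          Decode (CodeA x r.1) (CodeB y r.2.1) r.2.2 = (x, y))).card : ℝ)
      > (1 - ε) * 2 ^ (3 * R)

/-- `(mA, mB)` is an achievable pair of rates for the randomized combinatorial
Slepian–Wolf scheme with parameters `(n, T, ε)`. -/
def RandAchievable (n T mA mB : ℕ) (ε : ℝ) : Prop :=
  ∃ (R : ℕ)
    (CodeA : (Fin n → Bool) → (Fin R → Bool) → (Fin mA → Bool))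
    (CodeB : (Fin n → Bool) → (Fin R → Bool) → (Fin mB → Bool))
    (Decode : (Fin mA → Bool) → (Fin mB → Bool) → (Fin R → Bool) →
      (Fin n → Bool) × (Fin n → Bool)),
    RandProtocol n T R mA mB CodeA CodeB Decode ε


/-!
Alice and Bob each draw a private seed of `σ = O(√n)` bits, `i` and `j`, and send it
together with a linear hash `F i *ᵥ x`, resp. `G j *ᵥ y`; the decoder returns any pair at
distance at most `T` consistent with both hashes. It can only be fooled if, for `e = x - y`,
some kernel vectors `u ∈ ker (F i)`, `v ∈ ker (G j)`, not both zero, keep `e + u + v` in the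
Hamming ball of radius `T`, which has at most `2 ^ (h(α) n)` points.

For a uniformly random matrix with `b` rows a fixed nonzero vector lies in the kernel with
probability `2 ^ (-b)`. A union bound over the `(n + 2)`-subsets of seeds then shows that for a
random family every `e` is bad for at most `n + 1` seeds, as soon as the probability of a bad
seed is below `2 ^ (-σ - 1)`. For Bob this needs `m_B ≳ h(α) n + 2σ`. Alice must also beat
every `v` in the union of the kernels of Bob's matrices; by Markov's inequality a random family
for Bob with hashes of `b = m_B - σ` bits has this union of size about `2 ^ (σ + n - b)`, so
Alice needs `m_A + m_B ≳ (1 + h(α)) n + 4σ`. Then at most `2 (n + 1) 2 ^ σ` of the `2 ^ (2σ)`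
seed pairs fail, a fraction below `2 ^ (-√n)`.
-/

open Finset
open scoped Matrix

section Counting

variable {ι β : Type*} [Fintype ι] [DecidableEq ι] [Fintype β]

lemma card_filter_forall_mem_apply (S : Finset ι) (P : β → Prop) [DecidablePred P] :
    #{F : ι → β | ∀ i ∈ S, P (F i)} =
      #{b | P b} ^ #S * Fintype.card β ^ (Fintype.card ι - #S) := by
  have hpi : ({F : ι → β | ∀ i ∈ S, P (F i)} : Finset _) =
      Fintype.piFinset fun i => if i ∈ S then ({b | P b} : Finset β) else univ := by
    ext F
    simp only [mem_filter, mem_univ, true_and, Fintype.mem_piFinset]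
    exact ⟨fun h i => by split_ifs with hi <;> simp [h i, hi],
      fun h i hi => by simpa [hi] using h i⟩
  rw [hpi, Fintype.card_piFinset]
  simp only [apply_ite Finset.card, card_univ]
  rw [prod_ite, prod_const, prod_const, filter_not, card_sdiff_of_subset (filter_subset _ _),
    card_univ, filter_mem_eq_inter, univ_inter]

lemma card_filter_exists_le_card_filter_apply_le {E : Type*} [Fintype E] (bad : E → β → Prop)
    [∀ e, DecidablePred (bad e)] {p : ℝ} (hp0 : 0 ≤ p)
    (hp : ∀ e, (#{b | bad e b} : ℝ) ≤ p * Fintype.card β) (k : ℕ) :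
    (#{F : ι → β | ∃ e, k ≤ #{i | bad e (F i)}} : ℝ) ≤
      Fintype.card E * ((Fintype.card ι * p) ^ k * Fintype.card β ^ Fintype.card ι) := by
  classical
  have hsub : ({F : ι → β | ∃ e, k ≤ #{i | bad e (F i)}} : Finset _) ⊆
      univ.biUnion fun e =>
        (powersetCard k univ).biUnion fun S => {F | ∀ i ∈ S, bad e (F i)} := by
    intro F hF
    obtain ⟨e, he⟩ := (mem_filter.1 hF).2
    obtain ⟨S, hS, rfl⟩ := exists_subset_card_eq he
    simp only [mem_biUnion, mem_univ, mem_powersetCard, mem_filter, true_and]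
    exact ⟨e, S, ⟨subset_univ S, rfl⟩, fun i hi => (mem_filter.1 (hS hi)).2⟩
  have hcyl : ∀ e, ∀ S ∈ powersetCard k (univ : Finset ι),
      (#{F : ι → β | ∀ i ∈ S, bad e (F i)} : ℝ) ≤
        p ^ k * Fintype.card β ^ Fintype.card ι := by
    intro e S hS
    obtain ⟨-, rfl⟩ := mem_powersetCard.1 hS
    rw [card_filter_forall_mem_apply, Nat.cast_mul, Nat.cast_pow, Nat.cast_pow,
      ← Nat.add_sub_cancel' (card_le_univ S), pow_add, Nat.add_sub_cancel_left, ← mul_assoc,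
      ← mul_pow]
    gcongr
    exact hp e
  have hchoose : ((Fintype.card ι).choose k : ℝ) ≤ (Fintype.card ι : ℝ) ^ k := by
    exact_mod_cast Nat.choose_le_pow _ _
  calc (#{F : ι → β | ∃ e, k ≤ #{i | bad e (F i)}} : ℝ)
      ≤ ∑ e : E, ∑ S ∈ powersetCard k (univ : Finset ι),
          (#{F : ι → β | ∀ i ∈ S, bad e (F i)} : ℝ) := by
        grw [card_le_card hsub, card_biUnion_le]
        push_cast
        gcongr
        exact_mod_cast card_biUnion_le
    _ ≤ ∑ _e : E, ∑ _S ∈ powersetCard k (univ : Finset ι),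
          p ^ k * Fintype.card β ^ Fintype.card ι := by
        gcongr with e _ S hS
        exact hcyl e S hS
    _ ≤ _ := by
        simp only [sum_const, card_powersetCard, card_univ, nsmul_eq_mul, mul_pow, ← mul_assoc]
        gcongr

lemma card_filter_lt_sum_apply_mul_le (g : β → ℝ) (hg : ∀ b, 0 ≤ g b) (t : ℝ) :
    (#{F : ι → β | t < ∑ i, g (F i)} : ℝ) * t ≤
      Fintype.card ι * Fintype.card β ^ (Fintype.card ι - 1) * ∑ b, g b := by
  have hcoord : ∀ i, ∑ F : ι → β, g (F i) =
      Fintype.card β ^ (Fintype.card ι - 1) * ∑ b, g b := fun i => by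
    simpa [Fintype.piFinset_univ] using Fintype.sum_piFinset_apply g (univ : Finset β) i
  calc (#{F : ι → β | t < ∑ i, g (F i)} : ℝ) * t
      ≤ ∑ F ∈ ({F : ι → β | t < ∑ i, g (F i)} : Finset _), ∑ i, g (F i) := by
        rw [← nsmul_eq_mul]
        exact card_nsmul_le_sum _ _ _ fun F hF => (mem_filter.1 hF).2.le
    _ ≤ ∑ F : ι → β, ∑ i, g (F i) :=
        sum_le_sum_of_subset_of_nonneg (filter_subset _ _) fun F _ _ =>
          sum_nonneg fun i _ => hg _
    _ = _ := by
        rw [sum_comm, sum_congr rfl fun i _ => hcoord i, sum_const, card_univ, nsmul_eq_mul,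
          mul_assoc]

lemma card_filter_fst_fst_snd_eq_mul {A B C : Type*} [Fintype A] [Fintype B] [Fintype C]
    (P : A → B → Prop) [∀ a, DecidablePred (P a)] :
    #{r : A × B × C | P r.1 r.2.1} = #{p : A × B | P p.1 p.2} * Fintype.card C := by
  rw [← card_univ (α := C), ← card_product]
  refine card_bij (fun r _ => ((r.1, r.2.1), r.2.2)) (fun r hr => by simpa using hr)
    (fun r _ s _ h => by simp_all [Prod.ext_iff])
    (fun q hq => ⟨(q.1.1, q.1.2, q.2), by simpa using hq, rfl⟩)

end Counting

section LinearHashing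

variable {K m ι : Type*} [Field K] [Fintype ι]

lemma mulVec_surjective_of_ne_zero [DecidableEq ι] {u : ι → K} (hu : u ≠ 0) :
    Function.Surjective fun M : Matrix m ι K => M *ᵥ u := by
  obtain ⟨k, hk⟩ := Function.ne_iff.1 hu
  intro w
  refine ⟨Matrix.vecMulVec w (Pi.single k (u k)⁻¹), ?_⟩
  change Matrix.vecMulVec w _ *ᵥ u = w
  rw [Matrix.vecMulVec_mulVec, single_dotProduct, inv_mul_cancel₀ hk, MulOpposite.op_one,
    one_smul]

def KerMeetsBall [DecidableEq K] (T : ℕ) (e : ι → K) (M : Matrix m ι K) : Prop :=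
  ∃ u, u ≠ 0 ∧ M *ᵥ u = 0 ∧ hammingNorm (e + u) ≤ T

instance [Fintype K] [DecidableEq K] [DecidableEq ι] [Fintype m] (T : ℕ) (e : ι → K) :
    DecidablePred (KerMeetsBall (m := m) T e) :=
  fun M => decidable_of_iff (∃ u, u ≠ 0 ∧ M *ᵥ u = 0 ∧ hammingNorm (e + u) ≤ T) Iff.rfl

lemma eq_of_mulVec_eq_of_not_kerMeetsBall [DecidableEq K] {m' : Type*} {A : Matrix m ι K}
    {B : Matrix m' ι K} {T : ℕ} {x y x' y' : ι → K}
    (hA : ∀ v, B *ᵥ v = 0 → ¬ KerMeetsBall T (x - y + v) A)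
    (hB : ¬ KerMeetsBall T (x - y) B)
    (hx : A *ᵥ x' = A *ᵥ x) (hy : B *ᵥ y' = B *ᵥ y) (hd : hammingNorm (x' - y') ≤ T) :
    x' = x ∧ y' = y := by
  have hv : B *ᵥ (y - y') = 0 := by rw [Matrix.mulVec_sub, hy, sub_self]
  have hxx : x' = x := by
    by_contra hne
    refine hA _ hv ⟨x' - x, sub_ne_zero.2 hne, by rw [Matrix.mulVec_sub, hx, sub_self], ?_⟩
    convert hd using 2
    abel
  subst hxx
  refine ⟨rfl, ?_⟩
  by_contra hne
  refine hB ⟨y - y', sub_ne_zero.2 (Ne.symm hne), hv, ?_⟩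
  convert hd using 2
  abel

variable [Fintype K] [DecidableEq K] [DecidableEq ι] [Fintype m]

lemma card_exists_mulVec_eq_zero_le {S : Type*} [Fintype S] (G : S → Matrix m ι K) :
    (#({v | ∃ j, G j *ᵥ v = 0} : Finset (ι → K)) : ℝ) ≤
      1 + ∑ j, (#{v | v ≠ 0 ∧ G j *ᵥ v = 0} : ℝ) := by
  have hsub : ({v | ∃ j, G j *ᵥ v = 0} : Finset (ι → K)) ⊆
      insert 0 (univ.biUnion fun j => {v | v ≠ 0 ∧ G j *ᵥ v = 0}) := by
    intro v hv
    obtain ⟨j, hj⟩ := (mem_filter.1 hv).2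
    by_cases hv0 : v = 0
    · exact hv0 ▸ mem_insert_self _ _
    · exact mem_insert_of_mem (mem_biUnion.2 ⟨j, mem_univ _, by simp [hv0, hj]⟩)
  have := (card_le_card hsub).trans
    ((card_insert_le _ _).trans (Nat.add_le_add_right card_biUnion_le 1))
  rw [add_comm]
  exact_mod_cast this

variable [DecidableEq m]

lemma card_filter_mulVec_eq_zero_mul {u : ι → K} (hu : u ≠ 0) :
    #{M : Matrix m ι K | M *ᵥ u = 0} * Fintype.card (m → K) =
      Fintype.card (Matrix m ι K) := by
  let f : Matrix m ι K →+ (m → K) :=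
    AddMonoidHom.mk' (· *ᵥ u) fun A B => Matrix.add_mulVec A B u
  have hrange : f.range = ⊤ := AddMonoidHom.range_eq_top.2 (mulVec_surjective_of_ne_zero hu)
  have hcard := f.ker.card_mul_index
  rw [AddSubgroup.index_ker, hrange, AddSubgroup.card_top, Nat.card_eq_fintype_card,
    Nat.card_eq_fintype_card, Nat.card_eq_fintype_card, Fintype.card_subtype] at hcard
  rw [← hcard]
  congr 2
  ext M
  simp [f]

lemma sum_card_ker_mul_le :
    (∑ M : Matrix m ι K, #{u : ι → K | u ≠ 0 ∧ M *ᵥ u = 0}) * Fintype.card (m → K) ≤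
      Fintype.card (ι → K) * Fintype.card (Matrix m ι K) := by
  have hswap : ∑ M : Matrix m ι K, #{u : ι → K | u ≠ 0 ∧ M *ᵥ u = 0} =
      ∑ u : ι → K, #{M : Matrix m ι K | u ≠ 0 ∧ M *ᵥ u = 0} := by
    simp only [card_filter]
    exact sum_comm
  rw [hswap, sum_mul, ← card_univ (α := ι → K), ← smul_eq_mul, ← sum_const]
  refine sum_le_sum fun u _ => ?_
  by_cases hu : u = 0
  · simp [hu]
  · simpa [hu] using (card_filter_mulVec_eq_zero_mul (m := m) hu).le

lemma card_kerMeetsBall_mul_le (T : ℕ) (e : ι → K) :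
    #{M : Matrix m ι K | KerMeetsBall T e M} * Fintype.card (m → K) ≤
      #{w : ι → K | hammingNorm w ≤ T} * Fintype.card (Matrix m ι K) := by
  set U : Finset (ι → K) := {u | u ≠ 0 ∧ hammingNorm (e + u) ≤ T}
  have hsub : ({M : Matrix m ι K | KerMeetsBall T e M} : Finset _) ⊆
      U.biUnion fun u => {M | M *ᵥ u = 0} := by
    intro M hM
    obtain ⟨u, hu, hMu, hT⟩ := (mem_filter.1 hM).2
    exact mem_biUnion.2 ⟨u, by simp [U, hu, hT], by simp [hMu]⟩
  have hU : #U ≤ #{w : ι → K | hammingNorm w ≤ T} :=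
    card_le_card_of_injOn (e + ·) (fun u hu => by simp_all [U]) (add_right_injective e).injOn
  calc #{M : Matrix m ι K | KerMeetsBall T e M} * Fintype.card (m → K)
      ≤ (∑ u ∈ U, #{M : Matrix m ι K | M *ᵥ u = 0}) * Fintype.card (m → K) := by
        grw [card_le_card hsub, card_biUnion_le]
    _ = #U * Fintype.card (Matrix m ι K) := by
        rw [sum_mul, sum_congr rfl fun u hu =>
          card_filter_mulVec_eq_zero_mul (mem_filter.1 hu).2.1, sum_const, smul_eq_mul]
    _ ≤ _ := by gcongr

lemma card_exists_mem_kerMeetsBall_mul_le (T : ℕ) (W : Finset (ι → K)) (e : ι → K) :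
    #{M : Matrix m ι K | ∃ v ∈ W, KerMeetsBall T (e + v) M} * Fintype.card (m → K) ≤
      #W * #{w : ι → K | hammingNorm w ≤ T} * Fintype.card (Matrix m ι K) := by
  have hsub : ({M : Matrix m ι K | ∃ v ∈ W, KerMeetsBall T (e + v) M} : Finset _) ⊆
      W.biUnion fun v => {M | KerMeetsBall T (e + v) M} := by
    intro M hM
    obtain ⟨v, hv, hM⟩ := (mem_filter.1 hM).2
    exact mem_biUnion.2 ⟨v, hv, by simpa using hM⟩
  calc #{M : Matrix m ι K | ∃ v ∈ W, KerMeetsBall T (e + v) M} * Fintype.card (m → K)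
      ≤ ∑ v ∈ W,
          #{M : Matrix m ι K | KerMeetsBall T (e + v) M} * Fintype.card (m → K) := by
        grw [card_le_card hsub, card_biUnion_le, sum_mul]
    _ ≤ ∑ _v ∈ W, #{w : ι → K | hammingNorm w ≤ T} * Fintype.card (Matrix m ι K) :=
        sum_le_sum fun v _ => card_kerMeetsBall_mul_le T (e + v)
    _ = _ := by rw [sum_const, smul_eq_mul, mul_assoc]

end LinearHashing

section Families

variable {S : Type*} [Fintype S] [DecidableEq S] {n a T : ℕ}

lemma card_filter_exists_many_kerMeetsBall_le (W : Finset (Fin n → ZMod 2))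
    (h : (2 * Fintype.card S * #W * #{w : Fin n → ZMod 2 | hammingNorm w ≤ T} : ℝ) ≤
      2 ^ a) :
    (#{F : S → Matrix (Fin a) (Fin n) (ZMod 2) |
        ∃ e, n + 2 ≤ #{i | ∃ v ∈ W, KerMeetsBall T (e + v) (F i)}} : ℝ) ≤
      Fintype.card (Matrix (Fin a) (Fin n) (ZMod 2)) ^ Fintype.card S / 4 := by
  set p : ℝ := #W * #{w : Fin n → ZMod 2 | hammingNorm w ≤ T} / 2 ^ a
  have hp : ∀ e : Fin n → ZMod 2,
      (#{M : Matrix (Fin a) (Fin n) (ZMod 2) | ∃ v ∈ W, KerMeetsBall T (e + v) M} : ℝ) ≤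
        p * Fintype.card (Matrix (Fin a) (Fin n) (ZMod 2)) := by
    intro e
    have := card_exists_mem_kerMeetsBall_mul_le (m := Fin a) T W e
    simp only [Fintype.card_fun, ZMod.card, Fintype.card_fin] at this
    rw [div_mul_eq_mul_div, le_div_iff₀ (by positivity)]
    exact_mod_cast this
  have hNp : Fintype.card S * p ≤ 1 / 2 := by
    rw [mul_div_assoc', div_le_iff₀ (by positivity)]
    linarith
  calc _ ≤ (2 ^ n : ℕ) * ((Fintype.card S * p) ^ (n + 2) *
        Fintype.card (Matrix (Fin a) (Fin n) (ZMod 2)) ^ Fintype.card S) := by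
        simpa using
          card_filter_exists_le_card_filter_apply_le (ι := S) _ (by positivity) hp (n + 2)
    _ ≤ (2 ^ n : ℕ) * ((1 / 2) ^ (n + 2) *
        Fintype.card (Matrix (Fin a) (Fin n) (ZMod 2)) ^ Fintype.card S) := by
        gcongr
    _ = _ := by
        rw [Nat.cast_pow, pow_add, one_div_pow, one_div_pow]
        field_simp
        norm_num

lemma exists_family_card_exists_mem_kerMeetsBall_le (W : Finset (Fin n → ZMod 2))
    (h : (2 * Fintype.card S * #W * #{w : Fin n → ZMod 2 | hammingNorm w ≤ T} : ℝ) ≤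
      2 ^ a) :
    ∃ F : S → Matrix (Fin a) (Fin n) (ZMod 2),
      ∀ e, #{i | ∃ v ∈ W, KerMeetsBall T (e + v) (F i)} ≤ n + 1 := by
  by_contra! hbad
  simp only [Nat.lt_iff_add_one_le] at hbad
  have hall := card_filter_exists_many_kerMeetsBall_le (S := S) W h
  rw [filter_true_of_mem fun F _ => hbad F, card_univ, Fintype.card_fun] at hall
  have : (0 : ℝ) < Fintype.card (Matrix (Fin a) (Fin n) (ZMod 2)) ^ Fintype.card S := by
    positivity
  push_cast at hall
  linarith

lemma card_filter_lt_sum_card_ker_le [Nonempty S] :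
    (#{G : S → Matrix (Fin a) (Fin n) (ZMod 2) |
        2 * Fintype.card S * 2 ^ n / 2 ^ a <
          ∑ j, (#{v | v ≠ 0 ∧ G j *ᵥ v = 0} : ℝ)} : ℝ) ≤
      Fintype.card (Matrix (Fin a) (Fin n) (ZMod 2)) ^ Fintype.card S / 2 := by
  set c := Fintype.card (Matrix (Fin a) (Fin n) (ZMod 2))
  have hker : ∑ M : Matrix (Fin a) (Fin n) (ZMod 2), (#{v | v ≠ 0 ∧ M *ᵥ v = 0} : ℝ) ≤
      2 ^ n * c / 2 ^ a := by
    have := sum_card_ker_mul_le (K := ZMod 2) (m := Fin a) (ι := Fin n)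
    simp only [Fintype.card_fun, ZMod.card, Fintype.card_fin] at this
    rw [le_div_iff₀ (by positivity)]
    exact_mod_cast this
  have hpow : (c : ℝ) ^ (Fintype.card S - 1) * c = c ^ Fintype.card S :=
    pow_sub_one_mul Fintype.card_pos.ne' _
  refine le_of_mul_le_mul_right ?_ (by positivity : (0 : ℝ) < 2 * Fintype.card S * 2 ^ n / 2 ^ a)
  calc _ ≤ _ := card_filter_lt_sum_apply_mul_le
        (fun M : Matrix (Fin a) (Fin n) (ZMod 2) => (#{v | v ≠ 0 ∧ M *ᵥ v = 0} : ℝ))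
        (fun _ => by positivity) _
    _ ≤ Fintype.card S * (c : ℝ) ^ (Fintype.card S - 1) * (2 ^ n * c / 2 ^ a) := by gcongr
    _ = _ := by rw [← hpow]; ring

lemma exists_family_card_kerMeetsBall_le_and_sum_card_ker_le [Nonempty S]
    (h : (2 * Fintype.card S * #{w : Fin n → ZMod 2 | hammingNorm w ≤ T} : ℝ) ≤ 2 ^ a) :
    ∃ G : S → Matrix (Fin a) (Fin n) (ZMod 2),
      (∀ e, #{j | KerMeetsBall T e (G j)} ≤ n + 1) ∧
      ∑ j, (#{v | v ≠ 0 ∧ G j *ᵥ v = 0} : ℝ) ≤ 2 * Fintype.card S * 2 ^ n / 2 ^ a := by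
  set c := Fintype.card (Matrix (Fin a) (Fin n) (ZMod 2))
  set t : ℝ := 2 * Fintype.card S * 2 ^ n / 2 ^ a
  have hbad₁ := card_filter_exists_many_kerMeetsBall_le (S := S) {0} (T := T) (by simpa using h)
  simp only [mem_singleton, exists_eq_left, add_zero] at hbad₁
  have hbad₂ := card_filter_lt_sum_card_ker_le (S := S) (n := n) (a := a)
  by_contra! hbad
  have hcover : (univ : Finset (S → Matrix (Fin a) (Fin n) (ZMod 2))) ⊆
      ({G | ∃ e, n + 2 ≤ #{j | KerMeetsBall T e (G j)}} : Finset _) ∪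
        ({G | t < ∑ j, (#{v | v ≠ 0 ∧ G j *ᵥ v = 0} : ℝ)} : Finset _) := by
    intro G _
    by_cases hG : ∃ e, n + 2 ≤ #{j | KerMeetsBall T e (G j)}
    · exact mem_union_left _ (by simpa using hG)
    · push Not at hG
      exact mem_union_right _ (by simpa using hbad G fun e => Nat.le_of_lt_succ (hG e))
  have hcard := (Nat.cast_le (α := ℝ)).2 ((card_le_card hcover).trans (card_union_le _ _))
  rw [card_univ, Fintype.card_fun] at hcard
  push_cast at hcard
  have hc : (0 : ℝ) < c ^ Fintype.card S := by positivity
  linarith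

end Families

theorem RandAchievable.of_seeded {n T mA mB σ : ℕ} {ε : ℝ} {α β : Type*} [Fintype α]
    [Fintype β] (encA : (Fin n → Bool) → (Fin σ → Bool) → α)
    (encB : (Fin n → Bool) → (Fin σ → Bool) → β)
    (dec : α → β → (Fin n → Bool) × (Fin n → Bool))
    (hα : Fintype.card α ≤ 2 ^ mA) (hβ : Fintype.card β ≤ 2 ^ mB)
    (h : ∀ x y, hammingDist x y ≤ T → (1 - ε) * 2 ^ (2 * σ) <
      #{r : (Fin σ → Bool) × (Fin σ → Bool) | dec (encA x r.1) (encB y r.2) = (x, y)}) :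
    RandAchievable n T mA mB ε := by
  have : Nonempty α := ⟨encA default default⟩
  have : Nonempty β := ⟨encB default default⟩
  obtain ⟨ιA⟩ :=
    Function.Embedding.nonempty_of_card_le (β := Fin mA → Bool) (by simpa using hα)
  obtain ⟨ιB⟩ :=
    Function.Embedding.nonempty_of_card_le (β := Fin mB → Bool) (by simpa using hβ)
  refine ⟨σ, fun x r => ιA (encA x r), fun y r => ιB (encB y r),
    fun a b _ => dec (Function.invFun ιA a) (Function.invFun ιB b), fun x y hxy => ?_⟩
  simp only [Function.leftInverse_invFun ιA.injective _,
    Function.leftInverse_invFun ιB.injective _]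
  rw [card_filter_fst_fst_snd_eq_mul fun r₁ r₂ => dec (encA x r₁) (encB y r₂) = (x, y)]
  have := h x y hxy
  simp only [Fintype.card_fun, Fintype.card_bool, Fintype.card_fin] at this ⊢
  push_cast
  rw [show 3 * σ = 2 * σ + σ by ring, pow_add, ← mul_assoc]
  exact mul_lt_mul_of_pos_right this (by positivity)

def toZModTwo {n : ℕ} (x : Fin n → Bool) : Fin n → ZMod 2 := fun k => (x k).toNat

lemma toNat_cast_zmod_two_injective : Function.Injective fun b : Bool => (b.toNat : ZMod 2) := by
  decide

lemma toZModTwo_injective {n : ℕ} : Function.Injective (toZModTwo (n := n)) :=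
  fun _ _ h => funext fun k => toNat_cast_zmod_two_injective (congrFun h k)

lemma hammingNorm_toZModTwo_sub {n : ℕ} (x y : Fin n → Bool) :
    hammingNorm (toZModTwo x - toZModTwo y) = hammingDist x y := by
  rw [← hammingDist_comp (fun _ b => (b.toNat : ZMod 2)) fun _ => toNat_cast_zmod_two_injective,
    hammingDist_comm, hammingDist_eq_hammingNorm, neg_add_eq_sub]
  rfl

noncomputable def hashDecode {n σ a b : ℕ} (T : ℕ)
    (F : (Fin σ → Bool) → Matrix (Fin a) (Fin n) (ZMod 2))
    (G : (Fin σ → Bool) → Matrix (Fin b) (Fin n) (ZMod 2))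
    (s : (Fin σ → Bool) × (Fin a → ZMod 2)) (t : (Fin σ → Bool) × (Fin b → ZMod 2)) :
    (Fin n → Bool) × (Fin n → Bool) :=
  Classical.epsilon fun p =>
    hammingDist p.1 p.2 ≤ T ∧ F s.1 *ᵥ toZModTwo p.1 = s.2 ∧ G t.1 *ᵥ toZModTwo p.2 = t.2

lemma hashDecode_eq {n σ a b T : ℕ} {F : (Fin σ → Bool) → Matrix (Fin a) (Fin n) (ZMod 2)}
    {G : (Fin σ → Bool) → Matrix (Fin b) (Fin n) (ZMod 2)} {x y : Fin n → Bool}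
    {i j : Fin σ → Bool} (hxy : hammingDist x y ≤ T)
    (hi : ∀ v, G j *ᵥ v = 0 → ¬ KerMeetsBall T (toZModTwo x - toZModTwo y + v) (F i))
    (hj : ¬ KerMeetsBall T (toZModTwo x - toZModTwo y) (G j)) :
    hashDecode T F G (i, F i *ᵥ toZModTwo x) (j, G j *ᵥ toZModTwo y) = (x, y) := by
  have hex : ∃ p : (Fin n → Bool) × (Fin n → Bool), hammingDist p.1 p.2 ≤ T ∧
      F i *ᵥ toZModTwo p.1 = F i *ᵥ toZModTwo x ∧
        G j *ᵥ toZModTwo p.2 = G j *ᵥ toZModTwo y :=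
    ⟨(x, y), hxy, rfl, rfl⟩
  obtain ⟨hd, hxi, hyj⟩ := Classical.epsilon_spec hex
  obtain ⟨h₁, h₂⟩ := eq_of_mulVec_eq_of_not_kerMeetsBall hi hj hxi hyj
    ((hammingNorm_toZModTwo_sub _ _).trans_le hd)
  exact Prod.ext (toZModTwo_injective h₁) (toZModTwo_injective h₂)

theorem randAchievable_of_families {n T σ a b mA mB : ℕ} {ε : ℝ} (hA : σ + a ≤ mA)
    (hB : σ + b ≤ mB) (F : (Fin σ → Bool) → Matrix (Fin a) (Fin n) (ZMod 2))
    (G : (Fin σ → Bool) → Matrix (Fin b) (Fin n) (ZMod 2))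
    (hF : ∀ e, #{i | ∃ v ∈ ({v | ∃ j, G j *ᵥ v = 0} : Finset (Fin n → ZMod 2)),
      KerMeetsBall T (e + v) (F i)} ≤ n + 1)
    (hG : ∀ e, #{j | KerMeetsBall T e (G j)} ≤ n + 1) (hε : 2 * (n + 1) < ε * 2 ^ σ) :
    RandAchievable n T mA mB ε := by
  refine RandAchievable.of_seeded (fun x i => (i, F i *ᵥ toZModTwo x))
    (fun y j => (j, G j *ᵥ toZModTwo y)) (hashDecode T F G) ?_ ?_ fun x y hxy => ?_
  · simpa [← pow_add] using Nat.pow_le_pow_right two_pos hA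
  · simpa [← pow_add] using Nat.pow_le_pow_right two_pos hB
  set e := toZModTwo x - toZModTwo y
  set badA : Finset (Fin σ → Bool) :=
    {i | ∃ v ∈ ({v | ∃ j, G j *ᵥ v = 0} : Finset (Fin n → ZMod 2)),
      KerMeetsBall T (e + v) (F i)}
  set badB : Finset (Fin σ → Bool) := {j | KerMeetsBall T e (G j)}
  have hsub : badAᶜ ×ˢ badBᶜ ⊆ ({r : (Fin σ → Bool) × (Fin σ → Bool) |
      hashDecode T F G (r.1, F r.1 *ᵥ toZModTwo x) (r.2, G r.2 *ᵥ toZModTwo y) = (x, y)} :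
        Finset _) := by
    rintro ⟨i, j⟩ hij
    simp only [mem_product, mem_compl, badA, badB, mem_filter, mem_univ, true_and, not_exists,
      not_and] at hij
    exact mem_filter.2 ⟨mem_univ _, hashDecode_eq hxy (fun v hv => hij.1 v ⟨j, hv⟩) hij.2⟩
  have hcompl : ∀ s : Finset (Fin σ → Bool), (#sᶜ : ℝ) = 2 ^ σ - #s := fun s => by
    rw [card_compl, Nat.cast_sub (card_le_univ s)]
    simp
  have hA : (#badA : ℝ) ≤ n + 1 := by exact_mod_cast hF e
  have hB : (#badB : ℝ) ≤ n + 1 := by exact_mod_cast hG e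
  have hN : (0 : ℝ) < 2 ^ σ := by positivity
  calc (1 - ε) * 2 ^ (2 * σ) < ((2 : ℝ) ^ σ - #badA) * (2 ^ σ - #badB) := by
        rw [pow_mul']
        nlinarith [mul_lt_mul_of_pos_left hε hN, mul_nonneg (Nat.cast_nonneg (α := ℝ) #badA)
          (Nat.cast_nonneg (α := ℝ) #badB)]
    _ = #(badAᶜ ×ˢ badBᶜ) := by rw [card_product, Nat.cast_mul, hcompl, hcompl]
    _ ≤ _ := by exact_mod_cast card_le_card hsub

theorem randAchievable_of_le {n T σ a b mA mB : ℕ} {ε : ℝ} (hA : σ + a ≤ mA)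
    (hB : σ + b ≤ mB)
    (ha : (2 : ℝ) ^ (σ + 2) * #{w : Fin n → ZMod 2 | hammingNorm w ≤ T} ≤ 2 ^ a)
    (hb : (2 : ℝ) ^ (σ + 1) * #{w : Fin n → ZMod 2 | hammingNorm w ≤ T} ≤ 2 ^ b)
    (hab : (2 : ℝ) ^ (2 * σ + n + 3) * #{w : Fin n → ZMod 2 | hammingNorm w ≤ T} ≤
      2 ^ (a + b))
    (hε : 2 * (n + 1) < ε * 2 ^ σ) :
    RandAchievable n T mA mB ε := by
  obtain ⟨G, hG, hker⟩ := exists_family_card_kerMeetsBall_le_and_sum_card_ker_le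
    (S := Fin σ → Bool) (T := T) (a := b) (by simpa [pow_succ, mul_comm] using hb)
  simp only [Fintype.card_fun, Fintype.card_bool, Fintype.card_fin, Nat.cast_pow,
    Nat.cast_ofNat] at hker
  set V : ℝ := ((#{w : Fin n → ZMod 2 | hammingNorm w ≤ T} : ℕ) : ℝ)
  have hW : (#({v | ∃ j, G j *ᵥ v = 0} : Finset _) : ℝ) ≤ 1 + 2 * 2 ^ σ * 2 ^ n / 2 ^ b :=
    (card_exists_mulVec_eq_zero_le G).trans (by linarith)
  have hcross : 2 * 2 ^ σ * V * (2 * 2 ^ σ * 2 ^ n / 2 ^ b) ≤ (2 : ℝ) ^ a / 2 := by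
    rw [mul_div_assoc', div_le_div_iff₀ (by positivity) two_pos, ← pow_add]
    calc _ = (2 : ℝ) ^ (2 * σ + n + 3) * V := by ring
      _ ≤ _ := hab
  obtain ⟨F, hF⟩ := exists_family_card_exists_mem_kerMeetsBall_le (S := Fin σ → Bool)
    (a := a) (T := T) {v | ∃ j, G j *ᵥ v = 0} (by
      simp only [Fintype.card_fun, Fintype.card_bool, Fintype.card_fin, Nat.cast_pow,
        Nat.cast_ofNat]
      calc 2 * 2 ^ σ * (#({v | ∃ j, G j *ᵥ v = 0} : Finset _) : ℝ) * V
          ≤ 2 * 2 ^ σ * (1 + 2 * 2 ^ σ * 2 ^ n / 2 ^ b) * V := by gcongr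
        _ ≤ 2 ^ a := by
          rw [pow_succ, pow_succ] at ha
          linarith)
  exact randAchievable_of_families hA hB F G hF hG hε

lemma binEnt_mul_log_two (α : ℝ) :
    binEnt α * Real.log 2 = -(α * Real.log α + (1 - α) * Real.log (1 - α)) := by
  simp only [binEnt, Real.logb]
  field_simp
  ring

lemma two_rpow_neg_binEnt_mul_le {α : ℝ} (hα0 : 0 < α) (hα : α ≤ 1 / 2) {n j : ℕ}
    (hjn : j ≤ n) (hj : (j : ℝ) ≤ α * n) :
    (2 : ℝ) ^ (-(binEnt α * n)) ≤ α ^ j * (1 - α) ^ (n - j) := by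
  have h1α : 0 < 1 - α := by linarith
  have hlog : Real.log α ≤ Real.log (1 - α) := Real.log_le_log hα0 (by linarith)
  have hrhs : α ^ j * (1 - α) ^ (n - j) =
      Real.exp (j * Real.log α + ((n - j : ℕ) : ℝ) * Real.log (1 - α)) := by
    rw [Real.exp_add, Real.exp_nat_mul, Real.exp_nat_mul, Real.exp_log hα0, Real.exp_log h1α]
  rw [hrhs, Real.rpow_def_of_pos two_pos, Real.exp_le_exp, Nat.cast_sub hjn]
  have := binEnt_mul_log_two α
  nlinarith [mul_nonneg (sub_nonneg.2 hj) (sub_nonneg.2 hlog)]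

lemma sum_pow_hammingNorm_mul_pow_sub (n : ℕ) (α : ℝ) :
    ∑ w : Fin n → ZMod 2, α ^ hammingNorm w * (1 - α) ^ (n - hammingNorm w) = 1 := by
  set f : ZMod 2 → ℝ := fun z => if z = 0 then 1 - α else α
  have hf : ∀ w : Fin n → ZMod 2,
      α ^ hammingNorm w * (1 - α) ^ (n - hammingNorm w) = ∏ k, f (w k) := by
    intro w
    have hzero : #{k | w k = 0} + hammingNorm w = n := by
      convert card_filter_add_card_filter_not (s := univ) fun k => w k = 0
      · rfl
      · simp
    rw [prod_ite, prod_const, prod_const, show n - hammingNorm w = #{k | w k = 0} by omega,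
      mul_comm]
    rfl
  simp only [hf]
  rw [← Fintype.prod_sum]
  refine prod_eq_one fun _ _ => ?_
  rw [show (univ : Finset (ZMod 2)) = {0, 1} by decide, sum_pair (by decide)]
  simp [f]

lemma card_hammingNorm_le_le_two_rpow {n T : ℕ} {α : ℝ} (hα0 : 0 < α) (hα : α ≤ 1 / 2)
    (hT : (T : ℝ) ≤ α * n) :
    (#{w : Fin n → ZMod 2 | hammingNorm w ≤ T} : ℝ) ≤ 2 ^ (binEnt α * n) := by
  have hball : ∀ w ∈ ({w : Fin n → ZMod 2 | hammingNorm w ≤ T} : Finset _),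
      (2 : ℝ) ^ (-(binEnt α * n)) ≤ α ^ hammingNorm w * (1 - α) ^ (n - hammingNorm w) :=
    fun w hw => two_rpow_neg_binEnt_mul_le hα0 hα
      (hammingNorm_le_card_fintype.trans_eq (Fintype.card_fin n))
      (le_trans (by exact_mod_cast (mem_filter.1 hw).2) hT)
  have hmass :
      (#{w : Fin n → ZMod 2 | hammingNorm w ≤ T} : ℝ) * 2 ^ (-(binEnt α * n)) ≤ 1 :=
    calc _ ≤ ∑ w ∈ ({w : Fin n → ZMod 2 | hammingNorm w ≤ T} : Finset _),
          α ^ hammingNorm w * (1 - α) ^ (n - hammingNorm w) := by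
          rw [← nsmul_eq_mul]
          exact card_nsmul_le_sum _ _ _ hball
      _ ≤ ∑ w : Fin n → ZMod 2, α ^ hammingNorm w * (1 - α) ^ (n - hammingNorm w) :=
          sum_le_sum_of_subset_of_nonneg (filter_subset _ _) fun w _ _ => by
            have : 0 ≤ 1 - α := by linarith
            positivity
      _ = 1 := sum_pow_hammingNorm_mul_pow_sub n α
  rwa [Real.rpow_neg two_pos.le, ← div_eq_mul_inv, div_le_one (by positivity)] at hmass

lemma two_pow_mul_le_two_pow_of_le {V x : ℝ} {k m : ℕ} (hV : V ≤ 2 ^ x) (h : k + x ≤ m) :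
    (2 : ℝ) ^ k * V ≤ 2 ^ m := by
  calc (2 : ℝ) ^ k * V ≤ 2 ^ k * 2 ^ x := by gcongr
    _ = 2 ^ ((k : ℝ) + x) := by rw [Real.rpow_add two_pos, Real.rpow_natCast]
    _ ≤ 2 ^ (m : ℝ) := Real.rpow_le_rpow_of_exponent_le one_le_two h
    _ = 2 ^ m := Real.rpow_natCast 2 m

theorem randAchievable_of_card_le_two_rpow {n T σ mA mB : ℕ} {ε x : ℝ}
    (hV : (#{w : Fin n → ZMod 2 | hammingNorm w ≤ T} : ℝ) ≤ 2 ^ x)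
    (hA : x + (4 * σ + 3) ≤ mA) (hB : x + (4 * σ + 3) ≤ mB)
    (hAB : x + n + (4 * σ + 3) ≤ mA + mB) (hε : 2 * (n + 1) < ε * 2 ^ σ) :
    RandAchievable n T mA mB ε := by
  have hx : 0 ≤ x := by
    have h1 : (1 : ℝ) ≤ #{w : Fin n → ZMod 2 | hammingNorm w ≤ T} := by
      exact_mod_cast card_pos.2 ⟨0, by simp⟩
    rw [← Real.rpow_le_rpow_left_iff one_lt_two, Real.rpow_zero]
    exact h1.trans hV
  have hσA : σ ≤ mA := by exact_mod_cast (show (σ : ℝ) ≤ mA by linarith)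
  have hσB : σ ≤ mB := by exact_mod_cast (show (σ : ℝ) ≤ mB by linarith)
  refine randAchievable_of_le (a := mA - σ) (b := mB - σ) (by omega) (by omega)
    (two_pow_mul_le_two_pow_of_le hV ?_) (two_pow_mul_le_two_pow_of_le hV ?_)
    (two_pow_mul_le_two_pow_of_le hV ?_) hε <;>
  push_cast [Nat.cast_sub hσA, Nat.cast_sub hσB] <;> linarith

lemma two_mul_succ_lt_two_rpow_neg_sqrt_mul (n : ℕ) :
    2 * ((n : ℝ) + 1) <
      (2 : ℝ) ^ (-((n : ℝ) ^ (1 / 2 : ℝ))) * 2 ^ (3 * (Nat.sqrt n + 1) + 1) := by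
  set s := Nat.sqrt n + 1
  have hns : n + 1 ≤ s * s := Nat.lt_succ_sqrt n
  have hs : s * s < 2 ^ (2 * s) := by
    rw [pow_mul', sq]; exact Nat.mul_self_lt_mul_self Nat.lt_two_pow_self
  have hsqrt : (n : ℝ) ^ (1 / 2 : ℝ) ≤ s := by
    rw [← Real.sqrt_eq_rpow]; push_cast [s]; exact Real.real_sqrt_le_nat_sqrt_succ
  calc 2 * ((n : ℝ) + 1) < 2 * 2 ^ (2 * s) := by
        gcongr; exact_mod_cast hns.trans_lt hs
    _ = (2 : ℝ) ^ ((2 * s + 1 : ℕ) : ℝ) := by rw [Real.rpow_natCast]; ring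
    _ ≤ 2 ^ (-((n : ℝ) ^ (1 / 2 : ℝ)) + ((3 * s + 1 : ℕ) : ℝ)) := by
        apply Real.rpow_le_rpow_of_exponent_le one_le_two
        push_cast; linarith
    _ = _ := by rw [Real.rpow_add two_pos, Real.rpow_natCast]

lemma tendsto_sqrt_add_div_atTop (a b : ℝ) :
    Filter.Tendsto (fun n : ℕ => (a * √n + b) / n) Filter.atTop (nhds 0) := by
  have hsqrt : Filter.Tendsto (fun n : ℕ => (√(n : ℝ))⁻¹) Filter.atTop (nhds 0) :=
    (Real.tendsto_sqrt_atTop.comp tendsto_natCast_atTop_atTop).inv_tendsto_atTop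
  have hlim :=
    (hsqrt.const_mul a).add ((tendsto_one_div_atTop_nhds_zero_nat (𝕜 := ℝ)).const_mul b)
  rw [mul_zero, mul_zero, add_zero] at hlim
  refine hlim.congr' (Filter.eventually_gt_atTop 0 |>.mono fun n hn => ?_)
  have hn' : (0 : ℝ) < n := by exact_mod_cast hn
  have := Real.mul_self_sqrt hn'.le
  field_simp
  linear_combination -a * this

theorem stmt9 :
    ∃ d : ℝ, 0 < d ∧ ∃ δ : ℕ → ℝ,
      Filter.Tendsto (fun n : ℕ => δ n / n) Filter.atTop (nhds 0) ∧
      ∀ α : ℝ, 0 < α → α < 1 / 2 → ∀ n : ℕ, 1 ≤ n → ∀ mA mB : ℕ,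
        (mA : ℝ) + mB ≥ (1 + binEnt α) * n + δ n →
        (mA : ℝ) ≥ binEnt α * n + δ n →
        (mB : ℝ) ≥ binEnt α * n + δ n →
        RandAchievable n ⌊α * n⌋₊ mA mB ((2 : ℝ) ^ (-((n : ℝ) ^ d))) := by
  refine ⟨1 / 2, one_half_pos, fun n => 12 * √n + 19, tendsto_sqrt_add_div_atTop 12 19, ?_⟩
  intro α hα0 hα2 n _ mA mB hAB hA hB
  -- Seeds have `σ = 3 (⌊√n⌋ + 1) + 1` bits, and `δ n` covers the overhead `4σ + 3`.
  have hδ : (4 * (3 * (Nat.sqrt n + 1) + 1) + 3 : ℝ) ≤ 12 * √n + 19 := by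
    linarith [Real.nat_sqrt_le_real_sqrt (a := n)]
  refine randAchievable_of_card_le_two_rpow
    (card_hammingNorm_le_le_two_rpow hα0 hα2.le (Nat.floor_le (by positivity))) ?_ ?_ ?_
    (two_mul_succ_lt_two_rpow_neg_sqrt_mul n) <;>
  push_cast <;> linarith
end

section
/- (Law of large numbers for t-independent indicators, quantitative form.) Let (Ω, P) be a finite probability space and ξ_1, …, ξ_m : Ω → {0,1} random variables; let μ ∈ [0,1] and let t be a positive integer with t ≤ m such that for every choice of t distinct indices i_1 < … < i_t one has P[ξ_{i_1} = ξ_{i_2} = … = ξ_{i_t} = 1] ≤ μ^t. Then for every integer s with t ≤ s ≤ m, P[ξ_1 + … + ξ_m ≥ s] · C(s, t) ≤ C(m, t) · μ^t, where C(·,·) denotes the binomial coefficient. -/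
/-- Law of large numbers for `t`-independent indicator variables, quantitative
form: if every `t` of the variables are simultaneously `1` with probability at
most `μ^t`, then for `t ≤ s ≤ m` the probability that at least `s` of the `m`
variables equal `1`, multiplied by `C(s,t)`, is at most `C(m,t)·μ^t`. -/
theorem stmt12 {Ω : Type*} [Fintype Ω] (P : Ω → ℝ)
    (hP0 : ∀ ω, 0 ≤ P ω) (hP1 : ∑ ω, P ω = 1)
    (m : ℕ) (ξ : Fin m → Ω → Bool)
    (μ : ℝ) (hμ0 : 0 ≤ μ) (hμ1 : μ ≤ 1)
    (t : ℕ) (ht : 0 < t) (htm : t ≤ m)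
    (hind : ∀ S : Finset (Fin m), S.card = t →
      ∑ ω ∈ Finset.univ.filter (fun ω : Ω => ∀ i ∈ S, ξ i ω = true), P ω ≤ μ ^ t) :
    ∀ s : ℕ, t ≤ s → s ≤ m →
      (∑ ω ∈ Finset.univ.filter
          (fun ω : Ω => s ≤ (Finset.univ.filter (fun i : Fin m => ξ i ω = true)).card),
        P ω) * (s.choose t) ≤ (m.choose t) * μ ^ t := by
  intro s hts hsm
  set A : Ω → Finset (Fin m) := fun ω => Finset.univ.filter (fun i : Fin m => ξ i ω = true)
    with hA
  set F : Finset (Finset (Fin m)) := (Finset.univ : Finset (Fin m)).powersetCard t with hF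
  set Ωs : Finset Ω := Finset.univ.filter (fun ω : Ω => s ≤ (A ω).card) with hΩs
  have step1 : (∑ ω ∈ Ωs, P ω) * (s.choose t)
      ≤ ∑ ω ∈ Ωs, ∑ S ∈ F, (if S ⊆ A ω then P ω else 0) := by
    rw [Finset.sum_mul]
    apply Finset.sum_le_sum
    intro ω hω
    have hsle : s ≤ (A ω).card := (Finset.mem_filter.mp hω).2
    have h1 : ∑ S ∈ F, (if S ⊆ A ω then P ω else 0)
        = ∑ S ∈ F.filter (fun S => S ⊆ A ω), P ω := (Finset.sum_filter _ _).symm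
    have h2 : F.filter (fun S => S ⊆ A ω) = (A ω).powersetCard t := by
      ext S
      simp [hF, Finset.mem_powersetCard, and_comm]
    rw [h1, h2, Finset.sum_const, Finset.card_powersetCard, nsmul_eq_mul]
    have : (s.choose t : ℝ) ≤ ((A ω).card.choose t : ℝ) := by
      exact_mod_cast Nat.choose_le_choose t hsle
    calc P ω * (s.choose t : ℝ) = (s.choose t : ℝ) * P ω := mul_comm _ _
      _ ≤ ((A ω).card.choose t : ℝ) * P ω :=
          mul_le_mul_of_nonneg_right this (hP0 ω)
  have step2 : ∑ ω ∈ Ωs, ∑ S ∈ F, (if S ⊆ A ω then P ω else 0)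
      ≤ ∑ ω : Ω, ∑ S ∈ F, (if S ⊆ A ω then P ω else 0) := by
    apply Finset.sum_le_sum_of_subset_of_nonneg (Finset.filter_subset _ _)
    intro ω _ _
    apply Finset.sum_nonneg
    intro S _
    split
    · exact hP0 ω
    · exact le_rfl
  have step3 : ∑ ω : Ω, ∑ S ∈ F, (if S ⊆ A ω then P ω else 0)
      ≤ (m.choose t : ℝ) * μ ^ t := by
    rw [Finset.sum_comm]
    have hcard : F.card = m.choose t := by
      simp [hF, Finset.card_powersetCard]
    calc ∑ S ∈ F, ∑ ω : Ω, (if S ⊆ A ω then P ω else 0)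
        ≤ ∑ S ∈ F, μ ^ t := by
          apply Finset.sum_le_sum
          intro S hS
          have hScard : S.card = t := (Finset.mem_powersetCard.mp hS).2
          have : ∑ ω : Ω, (if S ⊆ A ω then P ω else 0)
              = ∑ ω ∈ Finset.univ.filter (fun ω : Ω => ∀ i ∈ S, ξ i ω = true), P ω := by
            rw [Finset.sum_filter]
            apply Finset.sum_congr rfl
            intro ω _
            congr 1
            simp only [hA, eq_iff_iff]
            constructor
            · intro h i hi
              have := h hi
              simpa using this
            · intro h i hi
              simp [h i hi]
          rw [this]
          exact hind S hScard
      _ = (m.choose t : ℝ) * μ ^ t := by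
          rw [Finset.sum_const, hcard, nsmul_eq_mul]
  exact le_trans step1 (le_trans step2 step3)
end

section
/- (Negative correlation across disjoint blocks.) Let Δ_1, …, Δ_t be pairwise disjoint subsets of {1, …, n}, each of cardinality k ≥ 1, let I ⊆ {1, …, n}, set ρ = |I|/n, and let δ > 0. For a uniformly random permutation π of {1, …, n}: P[ |π(I) ∩ Δ_j| > (ρ+δ)·k for all j = 1, …, t ] ≤ ( P[ |π(I) ∩ Δ_1| > (ρ+δ)·k ] )^t, and likewise P[ |π(I) ∩ Δ_j| < (ρ−δ)·k for all j = 1, …, t ] ≤ ( P[ |π(I) ∩ Δ_1| < (ρ−δ)·k ] )^t. -/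
/-!
Via `π ↦ π(I)`, a uniformly random permutation becomes a uniformly random `#I`-subset `S`, since
all fibres of this map have the same size. For a uniform `r`-subset `S`, an increasing event of
`S ∩ D` and an increasing event of `S \ D` are negatively correlated: given `#(S ∩ D) = a`, the sets
`S ∩ D` and `S \ D` are independent uniform subsets of `D` and `Dᶜ` of sizes `a` and `r - a`; the
conditional probability of the first event increases with `a` (a local LYM inequality, by double
counting) while that of the second decreases, and Chebyshev's sum inequality concludes. Induction
over the disjoint blocks gives the product bound, all blocks have the same law by symmetry, and the
lower tail is the upper tail for `Iᶜ`, because `#(π(Iᶜ) ∩ Δ) = k - #(π(I) ∩ Δ)`.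
-/

open Finset

theorem Nat.cross_mul_le_of_le {u v : ℕ → ℕ} (hv : ∀ m, v m = 0 → v (m + 1) = 0)
    (step : ∀ m, u m * v (m + 1) ≤ u (m + 1) * v m) {a b : ℕ} (hab : a ≤ b) :
    u a * v b ≤ u b * v a := by
  induction b, hab using Nat.le_induction with
  | base => rfl
  | succ b _ ih =>
    rcases Nat.eq_zero_or_pos (v b) with hb | hb
    · simp [hv b hb]
    refine Nat.le_of_mul_le_mul_right ?_ hb
    calc u a * v (b + 1) * v b = u a * v b * v (b + 1) := by ring
      _ ≤ u b * v a * v (b + 1) := by gcongr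
      _ = u b * v (b + 1) * v a := by ring
      _ ≤ u (b + 1) * v b * v a := Nat.mul_le_mul_right _ (step b)
      _ = u (b + 1) * v a * v b := by ring

theorem Nat.sum_antidiagonal_mul_sum_le (r : ℕ) {u v w z : ℕ → ℕ}
    (huv : ∀ a b, a ≤ b → u a * v b ≤ u b * v a)
    (hwz : ∀ a b, a ≤ b → w a * z b ≤ w b * z a) :
    (∑ x ∈ antidiagonal r, u x.1 * w x.2) * (∑ x ∈ antidiagonal r, v x.1 * z x.2)
      ≤ (∑ x ∈ antidiagonal r, u x.1 * z x.2) * (∑ x ∈ antidiagonal r, v x.1 * w x.2) := by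
  have double (F : ℕ × ℕ → ℕ × ℕ → ℕ) :
      2 * ∑ x ∈ antidiagonal r, ∑ y ∈ antidiagonal r, F x y
        = ∑ x ∈ antidiagonal r, ∑ y ∈ antidiagonal r, (F x y + F y x) := by
    simp_rw [sum_add_distrib]
    rw [sum_comm (f := fun x y => F y x)]
    ring
  -- On the antidiagonal `x.1 ≤ y.1` forces `y.2 ≤ x.2`: this is the rearrangement inequality.
  have pair {x y : ℕ × ℕ} (hx : x ∈ antidiagonal r) (hy : y ∈ antidiagonal r) (h : x.1 ≤ y.1) :
      u x.1 * w x.2 * (v y.1 * z y.2) + u y.1 * w y.2 * (v x.1 * z x.2)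
        ≤ u x.1 * z x.2 * (v y.1 * w y.2) + u y.1 * z y.2 * (v x.1 * w x.2) := by
    rw [HasAntidiagonal.mem_antidiagonal] at hx hy
    have hw := hwz y.2 x.2 (by omega)
    calc _ = u x.1 * v y.1 * (w x.2 * z y.2) + u y.1 * v x.1 * (w y.2 * z x.2) := by ring
      _ ≤ u x.1 * v y.1 * (w y.2 * z x.2) + u y.1 * v x.1 * (w x.2 * z y.2) :=
          mul_add_mul_le_mul_add_mul (huv _ _ h) hw
      _ = _ := by ring
  rw [sum_mul_sum, sum_mul_sum, ← Nat.mul_le_mul_left_iff two_pos, double, double]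
  refine sum_le_sum fun x hx => sum_le_sum fun y hy => ?_
  rcases le_total x.1 y.1 with h | h
  · exact pair hx hy h
  · linarith [pair hy hx h]

section Subsets

variable {α : Type*} [DecidableEq α]

theorem Equiv.Perm.exists_image_eq_of_card_eq {s t : Finset α} (h : #s = #t) :
    ∃ τ : Equiv.Perm α, s.image τ = t := by
  have := Set.powersetCard.isPretransitive (α := α) (n := #t)
  obtain ⟨τ, hτ⟩ := MulAction.exists_smul_eq (Equiv.Perm α)
    (⟨s, h⟩ : Set.powersetCard α #t) ⟨t, rfl⟩
  exact ⟨τ, by simpa [smul_finset_def, Equiv.Perm.smul_def] using congrArg Subtype.val hτ⟩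

theorem card_filter_powersetCard_mul_le (D : Finset α) {p : Finset α → Prop}
    [DecidablePred p] (hp : Monotone p) (a : ℕ) :
    #{T ∈ D.powersetCard a | p T} * (#D - a) ≤ #{T ∈ D.powersetCard (a + 1) | p T} * (a + 1) := by
  refine card_mul_le_card_mul (· ⊆ ·) (fun T hT => ?_) (fun T hT => ?_)
  · simp only [mem_filter, mem_powersetCard] at hT
    obtain ⟨⟨hTD, rfl⟩, hpT⟩ := hT
    rw [← card_sdiff_of_subset hTD]
    refine card_le_card_of_injOn (insert · T) (fun x hx => ?_) (fun x hx y hy hxy => ?_)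
    · rw [coe_sdiff, Set.mem_sdiff, mem_coe, mem_coe] at hx
      rw [mem_coe, mem_bipartiteAbove, mem_filter, mem_powersetCard]
      exact ⟨⟨⟨insert_subset hx.1 hTD, card_insert_of_notMem hx.2⟩,
        hp (subset_insert x T) hpT⟩, subset_insert x T⟩
    · simp only [coe_sdiff, Set.mem_sdiff, mem_coe] at hx hy
      simpa [hx.2, hy.2] using congrArg (x ∈ ·) hxy
  · simp only [mem_filter, mem_powersetCard] at hT
    calc #(bipartiteBelow (· ⊆ ·) _ T) ≤ #(T.powersetCard a) := by
          refine card_le_card fun T' hT' => ?_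
          simp only [mem_bipartiteBelow, mem_filter, mem_powersetCard] at hT'
          exact mem_powersetCard.2 ⟨hT'.2, hT'.1.1.2⟩
      _ = a + 1 := by rw [card_powersetCard, hT.1.2, Nat.choose_succ_self_right]

theorem card_filter_powersetCard_mul_choose_le (D : Finset α) {p : Finset α → Prop}
    [DecidablePred p] (hp : Monotone p) {a b : ℕ} (hab : a ≤ b) :
    #{T ∈ D.powersetCard a | p T} * (#D).choose b
      ≤ #{T ∈ D.powersetCard b | p T} * (#D).choose a := by
  refine Nat.cross_mul_le_of_le (u := fun m => #{T ∈ D.powersetCard m | p T}) (fun m hm => ?_)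
    (fun m => ?_) hab
  · rw [Nat.choose_eq_zero_iff] at hm ⊢
    omega
  · refine Nat.le_of_mul_le_mul_right (c := m + 1) ?_ (by omega)
    calc #{T ∈ D.powersetCard m | p T} * (#D).choose (m + 1) * (m + 1)
        = #{T ∈ D.powersetCard m | p T} * (#D - m) * (#D).choose m := by
          rw [mul_assoc, Nat.choose_succ_right_eq]; ring
      _ ≤ #{T ∈ D.powersetCard (m + 1) | p T} * (m + 1) * (#D).choose m :=
          Nat.mul_le_mul_right _ (card_filter_powersetCard_mul_le D hp m)
      _ = _ := by ring

variable [Fintype α]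

theorem card_filter_powersetCard_inter_sdiff (D : Finset α) (p q : Finset α → Prop)
    [DecidablePred p] [DecidablePred q] (r : ℕ) :
    #{S ∈ univ.powersetCard r | p (S ∩ D) ∧ q (S \ D)}
      = ∑ ab ∈ antidiagonal r,
          #{T ∈ D.powersetCard ab.1 | p T} * #{R ∈ Dᶜ.powersetCard ab.2 | q R} := by
  rw [card_eq_sum_card_fiberwise (f := fun S => (#(S ∩ D), #(S \ D))) (t := antidiagonal r)
    fun S hS => by
      simpa using (card_inter_add_card_sdiff S D).trans (mem_powersetCard.1 (mem_filter.1 hS).1).2]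
  refine sum_congr rfl fun ab hab => ?_
  rw [← card_product]
  refine card_bij (fun S _ => (S ∩ D, S \ D)) (fun S hS => ?_) (fun S _ S' _ h => ?_)
    (fun ⟨T, R⟩ hTR => ?_)
  · simp only [mem_filter, mem_product, mem_powersetCard, Prod.ext_iff] at hS ⊢
    exact ⟨⟨⟨inter_subset_right, hS.2.1⟩, hS.1.2.1⟩,
      ⟨fun x hx => mem_compl.2 (mem_sdiff.1 hx).2, hS.2.2⟩, hS.1.2.2⟩
  · obtain ⟨h₁, h₂⟩ := Prod.mk.inj h
    rw [← sup_inf_sdiff S D, ← sup_inf_sdiff S' D, inf_eq_inter, inf_eq_inter, h₁, h₂]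
  · simp only [mem_filter, mem_product, mem_powersetCard] at hTR
    obtain ⟨⟨⟨hTD, hT⟩, hpT⟩, ⟨hRD, hR⟩, hqR⟩ := hTR
    have hDR : Disjoint D R := by
      simpa [subset_compl_iff_disjoint_right, disjoint_comm] using hRD
    have hinter : (T ∪ R) ∩ D = T := by
      rw [union_inter_distrib_right, inter_eq_left.2 hTD, disjoint_iff_inter_eq_empty.1 hDR.symm,
        union_empty]
    have hsdiff : (T ∪ R) \ D = R := by
      rw [union_sdiff_distrib, sdiff_eq_empty_iff_subset.2 hTD, empty_union,
        hDR.symm.sdiff_eq_left]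
    refine ⟨T ∪ R, ?_, by rw [hinter, hsdiff]⟩
    simp only [mem_filter, mem_powersetCard, hinter, hsdiff, hT, hR,
      card_union_of_disjoint (hDR.mono_left hTD)]
    exact ⟨⟨⟨subset_univ _, HasAntidiagonal.mem_antidiagonal.1 hab⟩, hpT, hqR⟩, trivial⟩

theorem card_filter_inter_and_sdiff_mul_choose_le (D : Finset α) {p q : Finset α → Prop}
    [DecidablePred p] [DecidablePred q] (hp : Monotone p) (hq : Monotone q) (r : ℕ) :
    #{S ∈ univ.powersetCard r | p (S ∩ D) ∧ q (S \ D)} * (Fintype.card α).choose r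
      ≤ #{S ∈ univ.powersetCard r | p (S ∩ D)} * #{S ∈ univ.powersetCard r | q (S \ D)} := by
  have hP : #{S ∈ univ.powersetCard r | p (S ∩ D)} = ∑ ab ∈ antidiagonal r,
      #{T ∈ D.powersetCard ab.1 | p T} * (#Dᶜ).choose ab.2 := by
    simpa using card_filter_powersetCard_inter_sdiff D p (fun _ => True) r
  have hQ : #{S ∈ univ.powersetCard r | q (S \ D)} = ∑ ab ∈ antidiagonal r,
      (#D).choose ab.1 * #{R ∈ Dᶜ.powersetCard ab.2 | q R} := by
    simpa using card_filter_powersetCard_inter_sdiff D (fun _ => True) q r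
  rw [card_filter_powersetCard_inter_sdiff, hP, hQ, ← card_add_card_compl D, Nat.add_choose_eq]
  exact Nat.sum_antidiagonal_mul_sum_le r
    (fun a b hab => card_filter_powersetCard_mul_choose_le D hp hab)
    (fun a b hab => card_filter_powersetCard_mul_choose_le Dᶜ hq hab)

theorem card_filter_forall_inter_mul_choose_pow_le {ι : Type*} (Δ : ι → Finset α) (J : Finset ι)
    (hΔ : (J : Set ι).PairwiseDisjoint Δ) (P : ι → Finset α → Prop) [∀ j, DecidablePred (P j)]
    (hP : ∀ j ∈ J, Monotone (P j)) (r : ℕ) :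
    #{S ∈ univ.powersetCard r | ∀ j ∈ J, P j (S ∩ Δ j)} * (Fintype.card α).choose r ^ #J
      ≤ (Fintype.card α).choose r * ∏ j ∈ J, #{S ∈ univ.powersetCard r | P j (S ∩ Δ j)} := by
  classical
  induction J using Finset.induction_on with
  | empty => simp
  | @insert i J hi ih =>
    rw [coe_insert, Set.pairwiseDisjoint_insert] at hΔ
    have hJ (S : Finset α) {j} (hj : j ∈ J) : S \ Δ i ∩ Δ j = S ∩ Δ j := by
      have hij : Disjoint (Δ j) (Δ i) := (hΔ.2 j hj fun h => hi (h ▸ hj)).symm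
      rw [sdiff_inter_right_comm, (hij.mono_left inter_subset_right).sdiff_eq_left]
    have hmono : Monotone fun T => ∀ j ∈ J, P j (T ∩ Δ j) := fun T T' hT h j hj =>
      hP j (mem_insert_of_mem hj) (inter_subset_inter_right hT) (h j hj)
    have key := card_filter_inter_and_sdiff_mul_choose_le (Δ i) (hP i (mem_insert_self i J))
      hmono r
    simp +contextual only [hJ] at key
    rw [filter_congr fun S _ => forall_mem_insert .., card_insert_of_notMem hi, prod_insert hi,
      pow_succ, mul_comm _ ((Fintype.card α).choose r), ← mul_assoc]
    set N := (Fintype.card α).choose r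
    calc _ ≤ #{S ∈ univ.powersetCard r | P i (S ∩ Δ i)}
          * (#{S ∈ univ.powersetCard r | ∀ j ∈ J, P j (S ∩ Δ j)} * N ^ #J) := by
          rw [← mul_assoc]; exact Nat.mul_le_mul_right _ key
      _ ≤ #{S ∈ univ.powersetCard r | P i (S ∩ Δ i)}
          * (N * ∏ j ∈ J, #{S ∈ univ.powersetCard r | P j (S ∩ Δ j)}) :=
          Nat.mul_le_mul_left _ (ih hΔ.1 fun j hj => hP j (mem_insert_of_mem hj))
      _ = _ := by ring

theorem card_filter_powersetCard_card_inter_congr {A B : Finset α} (h : #A = #B)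
    (g : ℕ → Prop) [DecidablePred g] (r : ℕ) :
    #{S ∈ univ.powersetCard r | g #(S ∩ A)} = #{S ∈ univ.powersetCard r | g #(S ∩ B)} := by
  obtain ⟨τ, rfl⟩ := Equiv.Perm.exists_image_eq_of_card_eq h
  have hcard (S : Finset α) : #(S.image τ ∩ A.image τ) = #(S ∩ A) := by
    rw [← image_inter _ _ τ.injective, card_image_of_injective _ τ.injective]
  refine card_nbij' (image τ) (image τ.symm) (fun S hS => ?_) (fun S hS => ?_)
    (fun S _ => by simp [image_image]) (fun S _ => by simp [image_image])
  · simp only [coe_filter, mem_powersetCard, Set.mem_ofPred_eq] at hS ⊢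
    rw [card_image_of_injective _ τ.injective, hcard]
    exact ⟨⟨subset_univ _, hS.1.2⟩, hS.2⟩
  · simp only [coe_filter, mem_powersetCard, Set.mem_ofPred_eq] at hS ⊢
    rw [card_image_of_injective _ τ.symm.injective, ← hcard, image_image]
    simpa using hS

theorem card_filter_perm_image_eq_mul (I : Finset α) (p : Finset α → Prop) [DecidablePred p] :
    #{π : Equiv.Perm α | p (I.image π)}
      = #{S ∈ univ.powersetCard #I | p S} * #{π : Equiv.Perm α | I.image π = I} := by
  rw [card_eq_sum_card_fiberwise (f := fun π : Equiv.Perm α => I.image π)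
    (t := {S ∈ univ.powersetCard #I | p S}) fun π hπ => by
      simpa [card_image_of_injective _ π.injective] using hπ]
  refine sum_const_nat fun S hS => ?_
  obtain ⟨τ, hτ⟩ :=
    Equiv.Perm.exists_image_eq_of_card_eq (mem_powersetCard.1 (mem_filter.1 hS).1).2.symm
  rw [filter_filter]
  refine card_nbij' (τ⁻¹ * ·) (τ * ·) (fun π hπ => ?_) (fun π hπ => ?_) (fun π _ => by simp)
    (fun π _ => by simp)
  · simp only [coe_filter, mem_univ, true_and, Set.mem_ofPred_eq] at hπ ⊢
    rw [Equiv.Perm.coe_mul, ← image_image, hπ.2, ← hτ, image_image]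
    simp
  · simp only [coe_filter, mem_univ, true_and, Set.mem_ofPred_eq] at hπ ⊢
    rw [Equiv.Perm.coe_mul, ← image_image, hπ, hτ]
    exact ⟨(mem_filter.1 hS).2, rfl⟩

theorem card_filter_perm_image_mul_choose (I : Finset α) (p : Finset α → Prop)
    [DecidablePred p] :
    #{π : Equiv.Perm α | p (I.image π)} * (Fintype.card α).choose #I
      = #{S ∈ univ.powersetCard #I | p S} * Fintype.card (Equiv.Perm α) := by
  have htotal := card_filter_perm_image_eq_mul I fun _ => True
  simp only [filter_true, card_univ, card_powersetCard] at htotal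
  rw [card_filter_perm_image_eq_mul I p, htotal]
  ring

end Subsets

theorem card_filter_perm_forall_div_le_pow {α ι : Type*} [Fintype α] [DecidableEq α]
    [Fintype ι] (Δ : ι → Finset α) (hΔ : Pairwise fun i j => Disjoint (Δ i) (Δ j)) (j₀ : ι)
    (hcard : ∀ j, #(Δ j) = #(Δ j₀)) (I : Finset α) (c : ℝ) :
    (#{π : Equiv.Perm α | ∀ j, c < #(I.image π ∩ Δ j)} : ℝ) / Fintype.card (Equiv.Perm α)
      ≤ ((#{π : Equiv.Perm α | c < #(I.image π ∩ Δ j₀)} : ℝ)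
          / Fintype.card (Equiv.Perm α)) ^ Fintype.card ι := by
  have hchoose : 0 < (Fintype.card α).choose #I := Nat.choose_pos (card_le_univ I)
  have hprob (p : Finset α → Prop) [DecidablePred p] :
      (#{π : Equiv.Perm α | p (I.image π)} : ℝ) / Fintype.card (Equiv.Perm α)
        = #{S ∈ univ.powersetCard #I | p S} / (Fintype.card α).choose #I := by
    rw [div_eq_div_iff (by positivity) (by positivity)]
    exact_mod_cast card_filter_perm_image_mul_choose I p
  have hblock := card_filter_forall_inter_mul_choose_pow_le Δ univ
    (fun i _ j _ hij => hΔ hij) (fun _ T => c < #T)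
    (fun _ _ T T' hT h => h.trans_le (by exact_mod_cast card_le_card hT)) #I
  simp only [mem_univ, forall_const, card_univ] at hblock
  have hsym (j : ι) : #{S ∈ univ.powersetCard #I | c < (#(S ∩ Δ j) : ℝ)}
      = #{S ∈ univ.powersetCard #I | c < (#(S ∩ Δ j₀) : ℝ)} :=
    card_filter_powersetCard_card_inter_congr (hcard j) (fun m : ℕ => c < m) _
  rw [prod_congr rfl fun j _ => hsym j, prod_const, card_univ] at hblock
  rw [hprob fun S => ∀ j, c < #(S ∩ Δ j), hprob fun S => c < #(S ∩ Δ j₀), div_pow,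
    div_le_div_iff₀ (by positivity) (by positivity)]
  exact_mod_cast hblock.trans_eq (mul_comm _ _)

theorem card_image_inter_lt_iff_compl {n : ℕ} (hn : 0 < n) (π : Equiv.Perm (Fin n))
    (I Δ : Finset (Fin n)) {k : ℕ} (hΔ : #Δ = k) (δ : ℝ) :
    (#(I.image π ∩ Δ) : ℝ) < (#I / n - δ) * k ↔ (#Iᶜ / n + δ) * k < #(Iᶜ.image π ∩ Δ) := by
  have himage : Iᶜ.image π = (I.image π)ᶜ := by
    rw [← coe_inj, coe_image, coe_compl, coe_compl, coe_image]
    exact π.image_compl I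
  have hsplit : #(Iᶜ.image π ∩ Δ) + #(I.image π ∩ Δ) = k := by
    rw [himage, ← hΔ, ← card_inter_add_card_sdiff Δ (I.image π), sdiff_eq_inter_compl,
      inter_comm Δ, inter_comm Δ, add_comm]
  have hcompl : (#Iᶜ : ℝ) = n - #I := by
    rw [card_compl, Fintype.card_fin, Nat.cast_sub (by simpa using card_le_univ I)]
  rw [← Nat.cast_inj (R := ℝ), Nat.cast_add] at hsplit
  rw [hcompl, ← hsplit]
  have hn' : (n : ℝ) ≠ 0 := by positivity
  constructor <;> intro h <;> field_simp at h ⊢ <;> linarith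

open scoped Classical

theorem stmt14_general (n k t : ℕ) (hk : 1 ≤ k) (ht : 1 ≤ t)
    (Δ : Fin t → Finset (Fin n))
    (hdisj : Pairwise fun i j : Fin t => Disjoint (Δ i) (Δ j))
    (hcard : ∀ j : Fin t, (Δ j).card = k)
    (I : Finset (Fin n)) (δ : ℝ) :
    (((Finset.univ.filter (fun π : Equiv.Perm (Fin n) =>
          ∀ j : Fin t,
            ((I.image (fun x => π x) ∩ Δ j).card : ℝ) > ((I.card : ℝ) / n + δ) * k)).card : ℝ)
        / (Fintype.card (Equiv.Perm (Fin n)) : ℝ)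
      ≤ (((Finset.univ.filter (fun π : Equiv.Perm (Fin n) =>
            ((I.image (fun x => π x) ∩ Δ ⟨0, ht⟩).card : ℝ)
              > ((I.card : ℝ) / n + δ) * k)).card : ℝ)
          / (Fintype.card (Equiv.Perm (Fin n)) : ℝ)) ^ t) ∧
    (((Finset.univ.filter (fun π : Equiv.Perm (Fin n) =>
          ∀ j : Fin t,
            ((I.image (fun x => π x) ∩ Δ j).card : ℝ) < ((I.card : ℝ) / n - δ) * k)).card : ℝ)
        / (Fintype.card (Equiv.Perm (Fin n)) : ℝ)
      ≤ (((Finset.univ.filter (fun π : Equiv.Perm (Fin n) =>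
            ((I.image (fun x => π x) ∩ Δ ⟨0, ht⟩).card : ℝ)
              < ((I.card : ℝ) / n - δ) * k)).card : ℝ)
          / (Fintype.card (Equiv.Perm (Fin n)) : ℝ)) ^ t) := by
  have hn : 0 < n := by
    have := card_le_univ (Δ ⟨0, ht⟩)
    rw [hcard, Fintype.card_fin] at this
    omega
  have upper (J : Finset (Fin n)) (c : ℝ) :
      (#{π : Equiv.Perm (Fin n) | ∀ j, c < #(J.image π ∩ Δ j)} : ℝ)
          / Fintype.card (Equiv.Perm (Fin n))
        ≤ ((#{π : Equiv.Perm (Fin n) | c < #(J.image π ∩ Δ ⟨0, ht⟩)} : ℝ)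
          / Fintype.card (Equiv.Perm (Fin n))) ^ t := by
    -- `convert` also reconciles the `Decidable` instance `Nat.decidableForallFin` for `∀ j : Fin t`.
    convert card_filter_perm_forall_div_le_pow Δ hdisj ⟨0, ht⟩
      (fun j => (hcard j).trans (hcard _).symm) J c using 5
    exact (Fintype.card_fin t).symm
  refine ⟨upper I _, ?_⟩
  have hlow (j : Fin t) (π : Equiv.Perm (Fin n)) :=
    card_image_inter_lt_iff_compl hn π I _ (hcard j) δ
  rw [filter_congr fun π _ => forall_congr' fun j => hlow j π,
    filter_congr fun π _ => hlow ⟨0, ht⟩ π]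
  exact upper Iᶜ _

/-- Negative correlation across disjoint blocks: for a uniformly random
permutation `π` of `{1,…,n}` and pairwise disjoint blocks `Δ_1, …, Δ_t` of equal
cardinality `k`, the probability that all blocks simultaneously contain
abnormally many (resp. abnormally few) `π`-images of `I` is at most the `t`-th
power of the corresponding probability for a single block. -/
theorem stmt14 (n k t : ℕ) (hk : 1 ≤ k) (ht : 1 ≤ t)
    (Δ : Fin t → Finset (Fin n))
    (hdisj : Pairwise fun i j : Fin t => Disjoint (Δ i) (Δ j))
    (hcard : ∀ j : Fin t, (Δ j).card = k)
    (I : Finset (Fin n)) (δ : ℝ) (hδ : 0 < δ) :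
    (((Finset.univ.filter (fun π : Equiv.Perm (Fin n) =>
          ∀ j : Fin t,
            ((I.image (fun x => π x) ∩ Δ j).card : ℝ) > ((I.card : ℝ) / n + δ) * k)).card : ℝ)
        / (Fintype.card (Equiv.Perm (Fin n)) : ℝ)
      ≤ (((Finset.univ.filter (fun π : Equiv.Perm (Fin n) =>
            ((I.image (fun x => π x) ∩ Δ ⟨0, ht⟩).card : ℝ)
              > ((I.card : ℝ) / n + δ) * k)).card : ℝ)
          / (Fintype.card (Equiv.Perm (Fin n)) : ℝ)) ^ t) ∧
    (((Finset.univ.filter (fun π : Equiv.Perm (Fin n) =>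
          ∀ j : Fin t,
            ((I.image (fun x => π x) ∩ Δ j).card : ℝ) < ((I.card : ℝ) / n - δ) * k)).card : ℝ)
        / (Fintype.card (Equiv.Perm (Fin n)) : ℝ)
      ≤ (((Finset.univ.filter (fun π : Equiv.Perm (Fin n) =>
            ((I.image (fun x => π x) ∩ Δ ⟨0, ht⟩).card : ℝ)
              < ((I.card : ℝ) / n - δ) * k)).card : ℝ)
          / (Fintype.card (Equiv.Perm (Fin n)) : ℝ)) ^ t) :=
  stmt14_general n k t hk ht Δ hdisj hcard I δ
end

section
/- Let n = m·k and let {1, …, n} = Δ_1 ∪ … ∪ Δ_m be a partition into m pairwise disjoint blocks each of cardinality k ≥ 1; let I ⊆ {1, …, n}, ρ = |I|/n, δ > 0, and let π be a uniformly random permutation of {1, …, n}. Set μ = P[ |π(I) ∩ Δ_1| > (ρ+δ)·k ]. Then for all integers t, s with 1 ≤ t ≤ s ≤ m: P[ |{ j : |π(I) ∩ Δ_j| > (ρ+δ)·k }| ≥ s ] · C(s, t) ≤ C(m, t) · μ^t; and the analogous bound holds with the events |π(I) ∩ Δ_j| < (ρ−δ)·k and μ' = P[ |π(I) ∩ Δ_1|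 < (ρ−δ)·k ]. -/
/-!
Write `r = #I`. As `π ↦ π(I)` sends a uniform permutation to a uniform `r`-subset `S`, everything
is a statement about `S`. Counting the `t`-subsets of abnormal blocks gives
`P[at least s abnormal blocks] · C(s,t) ≤ ∑_{#T = t} P[every block of T abnormal]`, so, all blocks
having the same size, it suffices that the events `c < #(S ∩ Δ j)` for disjoint blocks are
negatively correlated. This is done one block `U` at a time: given `#(S ∩ U) = x`, the set `S \ U`
is a uniform `(r - x)`-subset of `Uᶜ`, and the proportion of `y`-subsets satisfying an up-closed
property grows with `y` (local LYM double counting), so the conditional probability of an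
up-closed event of `S \ U` decreases in `x`, and Chebyshev's sum inequality separates it from
`c < x`. For the lower tail, complementation turns `#(S ∩ Δ j) < c` into the up-closed
`k - c < #(Sᶜ ∩ Δ j)`.
-/

open Finset

section Slice

variable {α : Type*} [DecidableEq α] {E : Finset α → Prop} [DecidablePred E]

theorem card_filter_powersetCard_mul_le_succ (hE : Monotone E) (W : Finset α) (c : ℕ) :
    #{B ∈ W.powersetCard c | E B} * (#W - c)
      ≤ #{B ∈ W.powersetCard (c + 1) | E B} * (c + 1) := by
  refine card_mul_le_card_mul (· ⊆ ·) (fun B hB => ?_) (fun B' hB' => ?_)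
  · simp only [mem_filter, mem_powersetCard] at hB
    obtain ⟨⟨hBW, hBc⟩, hEB⟩ := hB
    calc #W - c = #(W \ B) := by rw [card_sdiff_of_subset hBW, hBc]
      _ ≤ _ := by
        refine card_le_card_of_injOn (insert · B) (fun v hv => ?_) ?_
        · simp only [coe_sdiff, Set.mem_sdiff, mem_coe] at hv
          simp only [coe_bipartiteAbove, Set.mem_ofPred_eq, mem_filter, mem_powersetCard]
          exact ⟨⟨⟨insert_subset hv.1 hBW, by rw [card_insert_of_notMem hv.2, hBc]⟩,
            hE (subset_insert v B) hEB⟩, subset_insert v B⟩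
        · intro v hv v' _ hvv'
          have hvB : v ∉ B := (mem_sdiff.1 (mem_coe.1 hv)).2
          simpa [hvB] using congrArg (v ∈ ·) hvv'
  · simp only [mem_filter, mem_powersetCard] at hB'
    calc _ ≤ #(B'.powersetCard c) := card_le_card fun B hB => by
          simp only [mem_bipartiteBelow, mem_filter, mem_powersetCard] at hB
          exact mem_powersetCard.2 ⟨hB.2, hB.1.1.2⟩
      _ = c + 1 := by rw [card_powersetCard, hB'.1.2, Nat.choose_succ_self_right]

theorem card_filter_powersetCard_mul_choose_le_s15 (hE : Monotone E) (W : Finset α) {c₁ c₂ : ℕ}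
    (h : c₁ ≤ c₂) :
    #{B ∈ W.powersetCard c₁ | E B} * (#W).choose c₂
      ≤ #{B ∈ W.powersetCard c₂ | E B} * (#W).choose c₁ := by
  induction c₂, h using Nat.le_induction with
  | base => rfl
  | succ c _ ih =>
    refine Nat.le_of_mul_le_mul_right ?_ c.succ_pos
    calc _ = #{B ∈ W.powersetCard c₁ | E B} * (#W).choose c * (#W - c) := by
          rw [mul_assoc, Nat.choose_succ_right_eq, mul_assoc]
      _ ≤ #{B ∈ W.powersetCard c | E B} * (#W - c) * (#W).choose c₁ := by
          rw [mul_right_comm _ (#W - c)]; exact Nat.mul_le_mul_right _ ih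
      _ ≤ _ := by
          rw [mul_right_comm _ ((#W).choose c₁)]
          exact Nat.mul_le_mul_right _ (card_filter_powersetCard_mul_le_succ hE W c)

end Slice

theorem sum_filter_mul_sum_le {ι R : Type*} [CommSemiring R] [PartialOrder R] [IsOrderedRing R]
    (s : Finset ι) (P : ι → Prop) [DecidablePred P] {u g h : ι → R} (hu : ∀ x ∈ s, 0 ≤ u x)
    (hgh : ∀ x ∈ s, P x → ∀ y ∈ s, ¬ P y → g x * h y ≤ h x * g y) :
    (∑ x ∈ s with P x, u x * g x) * ∑ x ∈ s, u x * h x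
      ≤ (∑ x ∈ s with P x, u x * h x) * ∑ x ∈ s, u x * g x := by
  rw [← sum_filter_add_sum_filter_not s P (fun x => u x * h x),
    ← sum_filter_add_sum_filter_not s P (fun x => u x * g x), mul_add, mul_add]
  refine add_le_add (mul_comm _ _).le ?_
  rw [sum_mul_sum, sum_mul_sum]
  refine sum_le_sum fun x hx => sum_le_sum fun y hy => ?_
  rw [mem_filter] at hx hy
  calc u x * g x * (u y * h y) = u x * u y * (g x * h y) := by ring
    _ ≤ u x * u y * (h x * g y) :=
        mul_le_mul_of_nonneg_left (hgh x hx.1 hx.2 y hy.1 hy.2)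
          (mul_nonneg (hu x hx.1) (hu y hy.1))
    _ = u x * h x * (u y * g y) := by ring

theorem card_filter_le_card_filter_mul_choose_le_sum {γ ι : Type*} [Fintype ι] [DecidableEq ι]
    (X : Finset γ) (A : ι → γ → Prop) [∀ j, DecidablePred (A j)] (s t : ℕ) :
    #{g ∈ X | s ≤ #{j | A j g}} * s.choose t
      ≤ ∑ T ∈ (univ : Finset ι).powersetCard t, #{g ∈ X | ∀ j ∈ T, A j g} := by
  calc #{g ∈ X | s ≤ #{j | A j g}} * s.choose t
      = ∑ g ∈ X with s ≤ #{j | A j g}, s.choose t := by rw [sum_const, smul_eq_mul]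
    _ ≤ ∑ g ∈ X with s ≤ #{j | A j g}, #(({j | A j g} : Finset ι).powersetCard t) :=
        sum_le_sum fun g hg => by
          rw [card_powersetCard]; exact Nat.choose_le_choose t (mem_filter.1 hg).2
    _ ≤ ∑ g ∈ X, #(({j | A j g} : Finset ι).powersetCard t) :=
        sum_le_sum_of_subset (filter_subset _ _)
    _ = ∑ g ∈ X, #{T ∈ (univ : Finset ι).powersetCard t | ∀ j ∈ T, A j g} :=
        sum_congr rfl fun g _ => by
          congr 1; ext T; simp [subset_iff, and_comm]
    _ = _ := sum_card_bipartiteAbove_eq_sum_card_bipartiteBelow _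

section Decomposition

variable {α : Type*} [DecidableEq α]

theorem union_inter_eq_of_subset_of_disjoint {A B U : Finset α} (hA : A ⊆ U)
    (hB : Disjoint B U) : (A ∪ B) ∩ U = A := by
  rw [union_inter_distrib_right, inter_eq_left.2 hA, disjoint_iff_inter_eq_empty.1 hB,
    union_empty]

theorem union_sdiff_eq_of_subset_of_disjoint {A B U : Finset α} (hA : A ⊆ U)
    (hB : Disjoint B U) : (A ∪ B) \ U = B := by
  rw [union_sdiff_distrib, sdiff_eq_empty_iff_subset.2 hA, sdiff_eq_self_of_disjoint hB,
    empty_union]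

variable [Fintype α]

theorem card_filter_powersetCard_univ_eq_sum (U : Finset α) (p : ℕ → Prop) [DecidablePred p]
    (E : Finset α → Prop) [DecidablePred E] (r : ℕ) :
    #{S ∈ (univ : Finset α).powersetCard r | p #(S ∩ U) ∧ E (S \ U)}
      = ∑ x ∈ range (r + 1) with p x,
          (#U).choose x * #{B ∈ Uᶜ.powersetCard (r - x) | E B} := by
  rw [card_eq_sum_card_fiberwise (f := fun S => #(S ∩ U)) (t := {x ∈ range (r + 1) | p x})
    fun S hS => by
    simp only [mem_coe, mem_filter, mem_powersetCard] at hS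
    simp only [mem_coe, mem_filter, mem_range]
    exact ⟨Nat.lt_succ_of_le (hS.1.2 ▸ card_le_card inter_subset_left), hS.2.1⟩]
  refine sum_congr rfl fun x hx => ?_
  rw [mem_filter, mem_range] at hx
  rw [← card_powersetCard, ← card_product]
  refine card_nbij' (fun S => (S ∩ U, S \ U)) (fun AB => AB.1 ∪ AB.2) (fun S hS => ?_)
    (fun AB hAB => ?_) (fun S _ => sup_inf_sdiff S U) (fun AB hAB => ?_)
  · simp only [mem_coe, mem_filter, mem_powersetCard] at hS
    obtain ⟨⟨⟨-, hSr⟩, -, hE⟩, hSx⟩ := hS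
    simp only [mem_coe, mem_product, mem_filter, mem_powersetCard]
    refine ⟨⟨inter_subset_right, hSx⟩, ⟨fun a ha => by simp_all, ?_⟩, hE⟩
    rw [card_sdiff, inter_comm, hSr, hSx]
  · simp only [mem_coe, mem_product, mem_filter, mem_powersetCard] at hAB
    obtain ⟨⟨hAU, hAx⟩, ⟨hBU, hBx⟩, hE⟩ := hAB
    have hBU' : Disjoint AB.2 U := subset_compl_iff_disjoint_right.1 hBU
    simp only [mem_coe, mem_filter, mem_powersetCard, union_inter_eq_of_subset_of_disjoint hAU hBU',
      union_sdiff_eq_of_subset_of_disjoint hAU hBU', hAx]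
    refine ⟨⟨⟨subset_univ _, ?_⟩, hx.2, hE⟩, trivial⟩
    rw [card_union_of_disjoint (disjoint_of_subset_left hAU hBU'.symm), hAx, hBx]
    omega
  · simp only [mem_coe, mem_product, mem_filter, mem_powersetCard] at hAB
    have hBU' : Disjoint AB.2 U := subset_compl_iff_disjoint_right.1 hAB.2.1.1
    exact Prod.ext (union_inter_eq_of_subset_of_disjoint hAB.1.1 hBU')
      (union_sdiff_eq_of_subset_of_disjoint hAB.1.1 hBU')

theorem card_filter_and_mul_choose_le (U : Finset α) {p : ℕ → Prop} [DecidablePred p]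
    (hp : Monotone p) {E : Finset α → Prop} [DecidablePred E] (hE : Monotone E) (r : ℕ) :
    #{S ∈ (univ : Finset α).powersetCard r | p #(S ∩ U) ∧ E (S \ U)} * (Fintype.card α).choose r
      ≤ #{S ∈ (univ : Finset α).powersetCard r | p #(S ∩ U)}
          * #{S ∈ (univ : Finset α).powersetCard r | E (S \ U)} := by
  have hp' := card_filter_powersetCard_univ_eq_sum U p (fun _ => True) r
  have hE' := card_filter_powersetCard_univ_eq_sum U (fun _ => True) E r
  have hchoose := card_filter_powersetCard_univ_eq_sum U (fun _ => True) (fun _ => True) r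
  simp only [and_true, filter_true, card_powersetCard, true_and, and_self, card_univ]
    at hp' hE' hchoose
  rw [card_filter_powersetCard_univ_eq_sum, hp', hE', hchoose]
  refine sum_filter_mul_sum_le _ p (fun _ _ => Nat.zero_le _) fun x _ hx y _ hy => ?_
  have hyx : y < x := lt_of_not_ge fun hxy => hy (hp hxy hx)
  rw [mul_comm ((#Uᶜ).choose _)]
  exact card_filter_powersetCard_mul_choose_le_s15 hE Uᶜ (by omega)

end Decomposition

section SliceProb

variable {α : Type*} [Fintype α]

noncomputable def sliceProb (r : ℕ) (Q : Finset α → Prop) [DecidablePred Q] : ℝ :=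
  #{S ∈ (univ : Finset α).powersetCard r | Q S} / (Fintype.card α).choose r

variable {r : ℕ}

theorem sliceProb_nonneg (Q : Finset α → Prop) [DecidablePred Q] : 0 ≤ sliceProb r Q := by
  unfold sliceProb; positivity

theorem sliceProb_congr {Q Q' : Finset α → Prop} [DecidablePred Q] [DecidablePred Q']
    (h : ∀ S, Q S ↔ Q' S) : sliceProb r Q = sliceProb r Q' := by
  unfold sliceProb
  rw [filter_congr fun S _ => h S]

theorem sliceProb_mul_choose_le_sum {ι : Type*} [Fintype ι] [DecidableEq ι]
    (A : ι → Finset α → Prop) [∀ j, DecidablePred (A j)] (r s t : ℕ) :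
    sliceProb r (fun S => s ≤ #{j | A j S}) * s.choose t
      ≤ ∑ T ∈ (univ : Finset ι).powersetCard t, sliceProb r (fun S => ∀ j ∈ T, A j S) := by
  unfold sliceProb
  rw [div_mul_eq_mul_div, ← sum_div]
  gcongr
  exact_mod_cast card_filter_le_card_filter_mul_choose_le_sum _ A s t

variable [DecidableEq α]

theorem sliceProb_compl (Q : Finset α → Prop) [DecidablePred Q] (hr : r ≤ Fintype.card α) :
    sliceProb (Fintype.card α - r) (fun S => Q Sᶜ) = sliceProb r Q := by
  unfold sliceProb
  rw [Nat.choose_symm hr]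
  congr 2
  refine card_nbij' compl compl (fun S hS => ?_) (fun S hS => ?_)
    (fun S _ => compl_compl S) (fun S _ => compl_compl S)
  · simp only [mem_coe, mem_filter, mem_powersetCard] at hS ⊢
    exact ⟨⟨subset_univ _, by rw [card_compl, hS.1.2]; omega⟩, hS.2⟩
  · simp only [mem_coe, mem_filter, mem_powersetCard] at hS ⊢
    exact ⟨⟨subset_univ _, by rw [card_compl, hS.1.2]⟩, by rw [compl_compl]; exact hS.2⟩

theorem sliceProb_card_inter_congr {U V : Finset α} (h : #U = #V) (p : ℕ → Prop)
    [DecidablePred p] :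
    sliceProb r (fun S => p #(S ∩ U)) = sliceProb r (fun S => p #(S ∩ V)) := by
  have hU := card_filter_powersetCard_univ_eq_sum U p (fun _ => True) r
  have hV := card_filter_powersetCard_univ_eq_sum V p (fun _ => True) r
  simp only [and_true, filter_true, card_powersetCard] at hU hV
  unfold sliceProb
  rw [hU, hV, h, card_compl, card_compl, h]

theorem sliceProb_and_le_mul (U : Finset α) {p : ℕ → Prop} [DecidablePred p] (hp : Monotone p)
    {E : Finset α → Prop} [DecidablePred E] (hE : Monotone E) (hEU : ∀ S, E (S \ U) ↔ E S) :
    sliceProb r (fun S => p #(S ∩ U) ∧ E S)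
      ≤ sliceProb r (fun S => p #(S ∩ U)) * sliceProb r E := by
  rw [sliceProb_congr (Q' := fun S => p #(S ∩ U) ∧ E (S \ U)) fun S => by rw [hEU],
    sliceProb_congr (Q := E) (Q' := fun S => E (S \ U)) fun S => (hEU S).symm]
  unfold sliceProb
  rcases eq_or_ne ((Fintype.card α).choose r) 0 with hC | hC
  · simp [hC]
  rw [div_mul_div_comm, ← div_div]
  gcongr
  rw [le_div_iff₀ (by positivity)]
  exact_mod_cast card_filter_and_mul_choose_le U hp hE r

theorem sliceProb_forall_le_prod {ι : Type*} [DecidableEq ι] (Δ : ι → Finset α)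
    {p : ι → ℕ → Prop} [∀ j, DecidablePred (p j)] (hp : ∀ j, Monotone (p j)) {T : Finset ι}
    (hT : (T : Set ι).PairwiseDisjoint Δ) :
    sliceProb r (fun S => ∀ j ∈ T, p j #(S ∩ Δ j))
      ≤ ∏ j ∈ T, sliceProb r (fun S => p j #(S ∩ Δ j)) := by
  induction T using Finset.induction_on with
  | empty =>
    simp only [notMem_empty, IsEmpty.forall_iff, implies_true, prod_empty]
    exact div_le_one_of_le₀ (by simp) (by positivity)
  | @insert j T hj ih =>
    have hdisj : ∀ i ∈ T, Disjoint (Δ i) (Δ j) := fun i hi =>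
      hT (mem_insert_of_mem hi) (mem_insert_self j T) (ne_of_mem_of_not_mem hi hj)
    have hmono : Monotone fun S => ∀ i ∈ T, p i #(S ∩ Δ i) := fun A B hAB hA i hi =>
      hp i (card_le_card (inter_subset_inter_right hAB)) (hA i hi)
    have hsdiff : ∀ S, (∀ i ∈ T, p i #((S \ Δ j) ∩ Δ i)) ↔ ∀ i ∈ T, p i #(S ∩ Δ i) :=
      fun S => forall₂_congr fun i hi => by
        rw [sdiff_inter_right_comm, sdiff_eq_self_of_disjoint
          (disjoint_of_subset_left inter_subset_right (hdisj i hi))]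
    rw [sliceProb_congr fun S => forall_mem_insert j T _, prod_insert hj]
    calc _ ≤ _ := sliceProb_and_le_mul (Δ j) (hp j) hmono hsdiff
      _ ≤ _ := mul_le_mul_of_nonneg_left (ih (hT.subset (subset_insert j T)))
          (sliceProb_nonneg _)

theorem sliceProb_forall_le_prod_of_antitone {ι : Type*} [DecidableEq ι] (Δ : ι → Finset α)
    {p : ι → ℕ → Prop} [∀ j, DecidablePred (p j)] (hp : ∀ j, Antitone (p j)) {T : Finset ι}
    (hT : (T : Set ι).PairwiseDisjoint Δ) (hr : r ≤ Fintype.card α) :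
    sliceProb r (fun S => ∀ j ∈ T, p j #(S ∩ Δ j))
      ≤ ∏ j ∈ T, sliceProb r (fun S => p j #(S ∩ Δ j)) := by
  have hcompl : ∀ S U : Finset α, #(Sᶜ ∩ U) = #U - #(S ∩ U) := fun S U => by
    rw [inter_comm, ← sdiff_eq_inter_compl, card_sdiff, inter_comm]
  have hmono : ∀ j, Monotone fun x => p j (#(Δ j) - x) := fun j a b hab =>
    hp j (Nat.sub_le_sub_left hab _)
  calc _ = sliceProb (Fintype.card α - r) (fun S => ∀ j ∈ T, p j (#(Δ j) - #(S ∩ Δ j))) := by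
        rw [← sliceProb_compl _ hr]
        exact sliceProb_congr fun S => by simp only [hcompl]
    _ ≤ ∏ j ∈ T, sliceProb (Fintype.card α - r) (fun S => p j (#(Δ j) - #(S ∩ Δ j))) :=
        sliceProb_forall_le_prod Δ hmono hT
    _ = _ := prod_congr rfl fun j _ => by
        rw [← sliceProb_compl _ hr]
        exact sliceProb_congr fun S => by simp only [hcompl]

end SliceProb

section Permutations

open Equiv
open scoped Pointwise

variable {α : Type*} [DecidableEq α]

theorem exists_perm_image_eq {I S : Finset α} (h : #S = #I) : ∃ σ : Perm α, I.image σ = S := by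
  obtain ⟨σ, hσ⟩ :=
    (Set.powersetCard.isPretransitive (α := α) (n := #I)).exists_smul_eq ⟨I, rfl⟩ ⟨S, h⟩
  exact ⟨σ, by simpa [smul_finset_def] using congrArg Subtype.val hσ⟩

theorem image_perm_mul (I : Finset α) (σ π : Perm α) : I.image ⇑(σ * π) = (I.image π).image σ := by
  rw [Perm.coe_mul, image_image]

variable [Fintype α]

theorem card_filter_perm_image_eq_of_card_eq (I : Finset α) {S : Finset α} (h : #S = #I) :
    #{π : Perm α | I.image π = S} = #{π : Perm α | I.image π = I} := by
  obtain ⟨σ, hσ⟩ := exists_perm_image_eq h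
  have hσ' : S.image ⇑σ⁻¹ = I := by
    rw [← hσ, ← image_perm_mul, inv_mul_cancel, Perm.coe_one, image_id]
  refine card_nbij' (σ⁻¹ * ·) (σ * ·) (fun π hπ => ?_) (fun π hπ => ?_)
    (fun π _ => by simp) (fun π _ => by simp)
  · simp only [coe_filter, mem_univ, true_and, Set.mem_ofPred_eq] at hπ ⊢
    rw [image_perm_mul, hπ, hσ']
  · simp only [coe_filter, mem_univ, true_and, Set.mem_ofPred_eq] at hπ ⊢
    rw [image_perm_mul, hπ, hσ]

theorem card_filter_perm_image (I : Finset α) (Q : Finset α → Prop) [DecidablePred Q] :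
    #{π : Perm α | Q (I.image π)}
      = #{S ∈ (univ : Finset α).powersetCard #I | Q S} * #{π : Perm α | I.image π = I} := by
  rw [card_eq_sum_card_fiberwise (f := fun π : Perm α => I.image π)
    (t := {S ∈ (univ : Finset α).powersetCard #I | Q S}) fun π hπ => by
      simp only [coe_filter, mem_univ, true_and, Set.mem_ofPred_eq, mem_powersetCard] at hπ ⊢
      exact ⟨⟨subset_univ _, card_image_of_injective _ π.injective⟩, hπ⟩,
    ← smul_eq_mul, ← sum_const]
  refine sum_congr rfl fun S hS => ?_
  rw [mem_filter, mem_powersetCard] at hS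
  rw [filter_filter, ← card_filter_perm_image_eq_of_card_eq I hS.1.2]
  congr 1
  exact filter_congr fun π _ => ⟨fun h => h.2, fun h => ⟨h ▸ hS.2, h⟩⟩

theorem card_filter_perm_image_div_card (I : Finset α) (Q : Finset α → Prop) [DecidablePred Q] :
    (#{π : Perm α | Q (I.image π)} : ℝ) / Fintype.card (Perm α) = sliceProb #I Q := by
  have hcard : Fintype.card (Perm α)
      = (Fintype.card α).choose #I * #{π : Perm α | I.image π = I} := by
    simpa using card_filter_perm_image I (fun _ => True)
  have hstab : (0 : ℝ) < #{π : Perm α | I.image π = I} := by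
    exact_mod_cast card_pos.2 ⟨1, by simp⟩
  rw [card_filter_perm_image, hcard, sliceProb]
  push_cast
  exact mul_div_mul_right _ _ hstab.ne'

theorem card_filter_perm_div_card_mul_choose_le {ι : Type*} [Fintype ι] [DecidableEq ι]
    (I : Finset α) (B : ι → Finset α → Prop) [∀ j, DecidablePred (B j)] (j₀ : ι) (s t : ℕ)
    (hB : ∀ T ∈ (univ : Finset ι).powersetCard t,
      sliceProb #I (fun S => ∀ j ∈ T, B j S) ≤ sliceProb #I (B j₀) ^ t) :
    (#{π : Perm α | s ≤ #{j | B j (I.image π)}} : ℝ) / Fintype.card (Perm α) * s.choose t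
      ≤ (Fintype.card ι).choose t
          * ((#{π : Perm α | B j₀ (I.image π)} : ℝ) / Fintype.card (Perm α)) ^ t := by
  rw [card_filter_perm_image_div_card I (fun S => s ≤ #{j | B j S}),
    card_filter_perm_image_div_card]
  calc _ ≤ _ := sliceProb_mul_choose_le_sum B #I s t
    _ ≤ ∑ T ∈ (univ : Finset ι).powersetCard t, sliceProb #I (B j₀) ^ t := sum_le_sum hB
    _ = _ := by rw [sum_const, card_powersetCard, card_univ, nsmul_eq_mul]

end Permutations

/-- Quantitative form of Lemma 1(b) for uniform permutations: if `{1,…,n}` is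
partitioned into `m` blocks of size `k`, and `μ` is the probability that a
single block contains abnormally many `π`-images of `I`, then for `1 ≤ t ≤ s ≤ m`
the probability that at least `s` blocks are abnormal, times `C(s,t)`, is at
most `C(m,t)·μ^t`; and likewise for abnormally few images. -/
theorem stmt15 (n m k : ℕ)
    (Δ : Fin m → Finset (Fin n))
    (hdisj : Pairwise fun i j : Fin m => Disjoint (Δ i) (Δ j))
    (hcard : ∀ j : Fin m, (Δ j).card = k)
    (I : Finset (Fin n)) (δ : ℝ)
    (t s : ℕ) (ht : 1 ≤ t) (hts : t ≤ s) (hsm : s ≤ m) :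
    ((((Finset.univ.filter (fun π : Equiv.Perm (Fin n) =>
          s ≤ (Finset.univ.filter (fun j : Fin m =>
            ((I.image (fun x => π x) ∩ Δ j).card : ℝ)
              > ((I.card : ℝ) / n + δ) * k)).card)).card : ℝ)
        / (Fintype.card (Equiv.Perm (Fin n)) : ℝ)) * (s.choose t)
      ≤ (m.choose t) *
        (((Finset.univ.filter (fun π : Equiv.Perm (Fin n) =>
            ((I.image (fun x => π x) ∩ Δ ⟨0, by omega⟩).card : ℝ)
              > ((I.card : ℝ) / n + δ) * k)).card : ℝ)
          / (Fintype.card (Equiv.Perm (Fin n)) : ℝ)) ^ t) ∧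
    ((((Finset.univ.filter (fun π : Equiv.Perm (Fin n) =>
          s ≤ (Finset.univ.filter (fun j : Fin m =>
            ((I.image (fun x => π x) ∩ Δ j).card : ℝ)
              < ((I.card : ℝ) / n - δ) * k)).card)).card : ℝ)
        / (Fintype.card (Equiv.Perm (Fin n)) : ℝ)) * (s.choose t)
      ≤ (m.choose t) *
        (((Finset.univ.filter (fun π : Equiv.Perm (Fin n) =>
            ((I.image (fun x => π x) ∩ Δ ⟨0, by omega⟩).card : ℝ)
              < ((I.card : ℝ) / n - δ) * k)).card : ℝ)
          / (Fintype.card (Equiv.Perm (Fin n)) : ℝ)) ^ t) := by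
  have hT (T : Finset (Fin m)) : (T : Set (Fin m)).PairwiseDisjoint Δ := hdisj.set_pairwise T
  have hpow (p : ℕ → Prop) [DecidablePred p] :
      ∀ T ∈ (univ : Finset (Fin m)).powersetCard t,
        ∏ j ∈ T, sliceProb #I (fun S => p #(S ∩ Δ j))
          = sliceProb #I (fun S => p #(S ∩ Δ ⟨0, by omega⟩)) ^ t := fun T hTt => by
    rw [prod_eq_pow_card fun j _ => sliceProb_card_inter_congr ((hcard j).trans (hcard _).symm) p,
      (mem_powersetCard.1 hTt).2]
  constructor
  · set p : ℕ → Prop := fun x => (x : ℝ) > ((#I : ℝ) / n + δ) * k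
    have hp : ∀ _ : Fin m, Monotone p := fun _ _ _ hab h => h.trans_le (by exact_mod_cast hab)
    have := card_filter_perm_div_card_mul_choose_le I (fun j S => p #(S ∩ Δ j)) ⟨0, by omega⟩ s t
      fun T hT' => by
        -- `convert` reconciles the two `Decidable` instances synthesised for `∀ j ∈ T, _`
        convert (sliceProb_forall_le_prod Δ hp (hT T)).trans_eq (hpow p T hT') using 2
    rwa [Fintype.card_fin] at this
  · set p : ℕ → Prop := fun x => (x : ℝ) < ((#I : ℝ) / n - δ) * k
    have hp : ∀ _ : Fin m, Antitone p := fun _ _ _ hab h => h.trans_le' (by exact_mod_cast hab)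
    have := card_filter_perm_div_card_mul_choose_le I (fun j S => p #(S ∩ Δ j)) ⟨0, by omega⟩ s t
      fun T hT' => by
        convert (sliceProb_forall_le_prod_of_antitone Δ hp (hT T) (card_le_univ I)).trans_eq
          (hpow p T hT') using 2
    rwa [Fintype.card_fin] at this
end

section
/- Let A(n, d) denote the maximum cardinality of a subset of {0,1}^n all of whose distinct elements have pairwise Hamming distance at least d. If the pair of integers (m_A, m_B) is achievable for the deterministic combinatorial Slepian–Wolf scheme with parameters (n, T), then 2^{m_A} · A(n, 2T+1) ≥ 2^n and 2^{m_B} · A(n, 2T+1) ≥ 2^n. -/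
open scoped Classical

/-- `A n d` is the maximum cardinality of a binary code of length `n` with
pairwise Hamming distance at least `d` between distinct codewords. -/
noncomputable def maxCodeSize (n d : ℕ) : ℕ :=
  Finset.sup
    (Finset.univ.filter (fun C : Finset (Fin n → Bool) =>
      ∀ x ∈ C, ∀ y ∈ C, x ≠ y → d ≤ hammingDist x y))
    Finset.card

lemma midpoint_exists {n : ℕ} (T : ℕ) (x x' : Fin n → Bool)
    (h : hammingDist x x' ≤ 2 * T) :
    ∃ y : Fin n → Bool, hammingDist x y ≤ T ∧ hammingDist x' y ≤ T := by
  classical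
  set D : Finset (Fin n) := Finset.univ.filter (fun i => x i ≠ x' i) with hD
  have hcard : hammingDist x x' = D.card := by
    simp [hammingDist, hD, Finset.filter_congr_decidable]
  obtain ⟨S, hSsub, hScard⟩ := Finset.exists_subset_card_eq (Nat.min_le_left D.card T)
  refine ⟨fun i => if i ∈ S then x' i else x i, ?_, ?_⟩
  · have : (Finset.univ.filter (fun i => x i ≠ if i ∈ S then x' i else x i)) = S := by
      ext i
      by_cases hi : i ∈ S
      · have := hSsub hi
        simp [hD, Finset.mem_filter] at this
        simp [hi, this]
      · simp [hi]
    calc hammingDist x _ ≤ S.card := by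
          rw [hammingDist]; exact le_of_eq (by rw [Finset.filter_congr_decidable]; exact congrArg Finset.card this)
      _ ≤ T := by rw [hScard]; exact Nat.min_le_right _ _
  · have : (Finset.univ.filter (fun i => x' i ≠ if i ∈ S then x' i else x i)) = D \ S := by
      ext i
      by_cases hi : i ∈ S
      · simp [hi]
      · simp [hi, hD, Finset.mem_filter, ne_comm]
    calc hammingDist x' _ ≤ (D \ S).card := by
          rw [hammingDist]; exact le_of_eq (by rw [Finset.filter_congr_decidable]; exact congrArg Finset.card this)
      _ ≤ T := by
          rw [Finset.card_sdiff_of_subset hSsub, hScard]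
          omega


lemma fiber_bound {n m T : ℕ} (f : (Fin n → Bool) → (Fin m → Bool))
    (hf : ∀ x x', f x = f x' → hammingDist x x' ≤ 2 * T → x = x') :
    2 ^ n ≤ 2 ^ m * maxCodeSize n (2 * T + 1) := by
  classical
  have key : ∀ c : Fin m → Bool,
      (Finset.univ.filter (fun x => f x = c)).card ≤ maxCodeSize n (2 * T + 1) := by
    intro c
    apply Finset.le_sup (f := Finset.card)
    simp only [Finset.mem_filter, Finset.mem_univ, true_and]
    intro x hx y hy hxy
    by_contra hlt
    push_neg at hlt
    exact hxy (hf x y (hx.trans hy.symm) (by omega))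
  have := Finset.card_eq_sum_card_fiberwise
    (f := f) (s := (Finset.univ : Finset (Fin n → Bool))) (t := Finset.univ)
    (fun x _ => Finset.mem_univ _)
  calc 2 ^ n = (Finset.univ : Finset (Fin n → Bool)).card := by
        simp
    _ = ∑ c : Fin m → Bool, (Finset.univ.filter (fun x => f x = c)).card := this
    _ ≤ ∑ _c : Fin m → Bool, maxCodeSize n (2 * T + 1) :=
        Finset.sum_le_sum (fun c _ => key c)
    _ = 2 ^ m * maxCodeSize n (2 * T + 1) := by
        simp [Finset.sum_const, mul_comm]

theorem stmt17 {n T mA mB : ℕ} (h : Achievable n T mA mB) :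
    2 ^ mA * maxCodeSize n (2 * T + 1) ≥ 2 ^ n ∧
    2 ^ mB * maxCodeSize n (2 * T + 1) ≥ 2 ^ n := by
  obtain ⟨CA, CB, hud⟩ := h
  constructor
  · apply fiber_bound CA
    intro x x' hfe hdist
    obtain ⟨y, hy1, hy2⟩ := midpoint_exists T x x' hdist
    have := hud x y x' y hy1 hy2 hfe rfl
    exact (Prod.mk.injEq _ _ _ _ ▸ this).1
  · apply fiber_bound CB
    intro y y' hfe hdist
    obtain ⟨x, hx1, hx2⟩ := midpoint_exists T y y' hdist
    have := hud x y x y' (by rwa [hammingDist_comm]) (by rwa [hammingDist_comm]) rfl hfe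
    exact (Prod.mk.injEq _ _ _ _ ▸ this).2
end
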